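/- arXiv:2510.25507 — 11 statements merged into one kernel-verified Lean document; each statement's English description precedes it below -/
import Mathlib

section
/- Let μ be a σ-finite measure on a measurable space X and let p, q : X → [0,∞) be measurable probability density functions with respect to μ, i.e. ∫ p dμ = ∫ q dμ = 1. Then the squared Hellinger distance between p and the mixture (p+q)/2 satisfies (1/2) ∫_X ( √(p(x)) − √((p(x)+q(x))/2) )² dμ(x) ≤ 1 − 1/√2. -/
/-!
Pointwise, `√((a + b) / 2) ≥ √(a / 2)` bounds the cross term of the square from below, which gives
`(√a - √((a + b) / 2))² ≤ (3/2 - √2) a + b / 2`. Integrating against the two probability densities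
yields `(1/2)(3/2 - √2 + 1/2) = 1 - 1/√2`.
-/

open MeasureTheory
open scoped ENNReal

lemma sq_sqrt_sub_sqrt_midpoint_le {a b : ℝ} (ha : 0 ≤ a) (hb : 0 ≤ b) :
    (√a - √((a + b) / 2)) ^ 2 ≤ (3 / 2 - √2) * a + 1 / 2 * b := by
  have hcross : √2 * a ≤ 2 * (√a * √((a + b) / 2)) := by
    have h : √a ≤ √2 * √((a + b) / 2) := by
      rw [← Real.sqrt_mul zero_le_two]
      exact Real.sqrt_le_sqrt (by linarith)
    calc √2 * a = √2 * (√a * √a) := by rw [Real.mul_self_sqrt ha]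
      _ ≤ √2 * (√a * (√2 * √((a + b) / 2))) := by gcongr
      _ = √2 * √2 * (√a * √((a + b) / 2)) := by ring
      _ = 2 * (√a * √((a + b) / 2)) := by rw [Real.mul_self_sqrt zero_le_two]
  nlinarith [Real.sq_sqrt ha, Real.sq_sqrt (by positivity : 0 ≤ (a + b) / 2)]

lemma lintegral_ofReal_le_mul_add_mul {X : Type*} [MeasurableSpace X] {μ : Measure X}
    {f p q : X → ℝ} {c d : ℝ} (hc : 0 ≤ c) (hd : 0 ≤ d) (hpm : Measurable p)
    (hp0 : ∀ x, 0 ≤ p x) (hq0 : ∀ x, 0 ≤ q x) (hf : ∀ x, f x ≤ c * p x + d * q x) :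
    ∫⁻ x, ENNReal.ofReal (f x) ∂μ
      ≤ ENNReal.ofReal c * ∫⁻ x, ENNReal.ofReal (p x) ∂μ
        + ENNReal.ofReal d * ∫⁻ x, ENNReal.ofReal (q x) ∂μ := by
  rw [← lintegral_const_mul' _ _ ENNReal.ofReal_ne_top,
    ← lintegral_const_mul' _ _ ENNReal.ofReal_ne_top,
    ← lintegral_add_left' (hpm.ennreal_ofReal.const_mul _).aemeasurable]
  refine lintegral_mono fun x => ?_
  rw [← ENNReal.ofReal_mul hc, ← ENNReal.ofReal_mul hd,
    ← ENNReal.ofReal_add (mul_nonneg hc (hp0 x)) (mul_nonneg hd (hq0 x))]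
  exact ENNReal.ofReal_le_ofReal (hf x)

theorem squared_hellinger_to_mixture_le_general {X : Type*} [MeasurableSpace X]
    (μ : Measure X)
    (p q : X → ℝ) (hpm : Measurable p)
    (hp0 : ∀ x, 0 ≤ p x) (hq0 : ∀ x, 0 ≤ q x)
    (hp1 : ∫⁻ x, ENNReal.ofReal (p x) ∂μ = 1)
    (hq1 : ∫⁻ x, ENNReal.ofReal (q x) ∂μ = 1) :
    (1 / 2 : ℝ≥0∞) *
        ∫⁻ x, ENNReal.ofReal ((Real.sqrt (p x) - Real.sqrt ((p x + q x) / 2)) ^ 2) ∂μ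
      ≤ ENNReal.ofReal (1 - 1 / Real.sqrt 2) := by
  have hc : 0 ≤ 3 / 2 - √2 := by
    rw [sub_nonneg, Real.sqrt_le_iff]
    norm_num
  have hbound := lintegral_ofReal_le_mul_add_mul (μ := μ) hc (by norm_num : (0 : ℝ) ≤ 1 / 2)
    hpm hp0 hq0 fun x => sq_sqrt_sub_sqrt_midpoint_le (hp0 x) (hq0 x)
  rw [hp1, hq1, mul_one, mul_one, ← ENNReal.ofReal_add hc (by norm_num)] at hbound
  have hconst : (3 / 2 - √2 + 1 / 2) / 2 = 1 - 1 / √2 := by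
    have h : √2 * √2 = 2 := Real.mul_self_sqrt zero_le_two
    field_simp
    linarith
  calc (1 / 2 : ℝ≥0∞) * _ ≤ (1 / 2) * ENNReal.ofReal (3 / 2 - √2 + 1 / 2) := by gcongr
    _ = ENNReal.ofReal ((3 / 2 - √2 + 1 / 2) / 2) := by
      rw [ENNReal.ofReal_div_of_pos two_pos, ENNReal.ofReal_ofNat, one_div, ENNReal.div_eq_inv_mul]
    _ = ENNReal.ofReal (1 - 1 / √2) := by rw [hconst]

/-- For probability densities `p, q` with respect to a σ-finite measure `μ`,
the squared Hellinger distance between `p` and the mixture `(p+q)/2` satisfies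
`(1/2) ∫ (√p − √((p+q)/2))² dμ ≤ 1 − 1/√2`. -/
theorem squared_hellinger_to_mixture_le {X : Type*} [MeasurableSpace X]
    (μ : Measure X) [SigmaFinite μ]
    (p q : X → ℝ) (hpm : Measurable p) (hqm : Measurable q)
    (hp0 : ∀ x, 0 ≤ p x) (hq0 : ∀ x, 0 ≤ q x)
    (hp1 : ∫⁻ x, ENNReal.ofReal (p x) ∂μ = 1)
    (hq1 : ∫⁻ x, ENNReal.ofReal (q x) ∂μ = 1) :
    (1 / 2 : ℝ≥0∞) *
        ∫⁻ x, ENNReal.ofReal ((Real.sqrt (p x) - Real.sqrt ((p x + q x) / 2)) ^ 2) ∂μ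
      ≤ ENNReal.ofReal (1 - 1 / Real.sqrt 2) :=
  squared_hellinger_to_mixture_le_general μ p q hpm hp0 hq0 hp1 hq1
end

section
/- Let P and Q be probability measures on a standard Borel space X with P ≪ Q, and let g : X → [0,∞] be a measurable version of the Radon–Nikodym derivative dP/dQ. Let g♯P and g♯Q denote the pushforward (image) measures of P and Q under the map g. Then g♯P ≪ g♯Q, and the Radon–Nikodym derivative of g♯P with respect to g♯Q equals the identity function, i.e. d(g♯P)/d(g♯Q)(y) = y for g♯Q-almost every y ∈ [0,∞]. -/
open MeasureTheory
open scoped ENNReal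

/-- If `P ≪ Q` are probability measures on a standard Borel space and
`g` is a measurable version of the Radon–Nikodym derivative `dP/dQ`, then the
pushforward measures satisfy `g♯P ≪ g♯Q`, and the Radon–Nikodym derivative
`d(g♯P)/d(g♯Q)` equals the identity function `g♯Q`-almost everywhere. -/
theorem rnDeriv_map_density_ratio_eq_id {X : Type*} [MeasurableSpace X]
    [StandardBorelSpace X]
    (P Q : Measure X) [IsProbabilityMeasure P] [IsProbabilityMeasure Q]
    (hPQ : P ≪ Q)
    (g : X → ℝ≥0∞) (hg : Measurable g) (hver : g =ᵐ[Q] P.rnDeriv Q) :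
    P.map g ≪ Q.map g ∧ (P.map g).rnDeriv (Q.map g) =ᵐ[Q.map g] id := by
  have hP : Q.withDensity g = P := by
    rw [withDensity_congr_ae hver, Measure.withDensity_rnDeriv_eq P Q hPQ]
  have hmap : P.map g = (Q.map g).withDensity id := by
    ext s hs
    rw [Measure.map_apply hg hs, withDensity_apply _ hs,
      setLIntegral_map hs measurable_id hg, ← hP,
      withDensity_apply _ (hg hs)]
    simp
  have : IsProbabilityMeasure (Q.map g) := Measure.isProbabilityMeasure_map hg.aemeasurable
  constructor
  · rw [hmap]
    exact withDensity_absolutelyContinuous _ _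
  · rw [hmap]
    exact Measure.rnDeriv_withDensity _ measurable_id
end

section
/- Let P and Q be probability measures on a standard Borel space X with P ≪ Q, and let g : X → [0,∞] be a measurable version of the Radon–Nikodym derivative dP/dQ. Let T : [0,∞] → Y be an injective measurable map into a standard Borel space Y, and set T_g = T ∘ g. Then for every measurable function φ : [0,∞] → [0,∞], ∫_Y φ( d(T_g♯P)/d(T_g♯Q)(y) ) d(T_g♯Q)(y) = ∫_X φ( g(x) ) dQ(x). In particular, the φ-divergence is preserved: D_φ(T_g♯P ∥ T_g♯Q) = D_φ(P ∥ Q). -/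
open MeasureTheory
open scoped ENNReal

/-- Let `P ≪ Q` be probability measures on a standard Borel space,
`g` a measurable version of `dP/dQ`, and `T : [0,∞] → Y` an injective measurable map
into a standard Borel space. With `T_g = T ∘ g`, for every measurable
`φ : [0,∞] → [0,∞]` one has
`∫ φ(d(T_g♯P)/d(T_g♯Q)) d(T_g♯Q) = ∫ φ(g) dQ`; in particular the φ-divergence is
preserved: `D_φ(T_g♯P ∥ T_g♯Q) = D_φ(P ∥ Q)`. -/
theorem phi_divergence_preserved_by_injective_transform_of_density_ratio
    {X Y : Type*} [MeasurableSpace X] [StandardBorelSpace X]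
    [MeasurableSpace Y] [StandardBorelSpace Y]
    (P Q : Measure X) [IsProbabilityMeasure P] [IsProbabilityMeasure Q]
    (hPQ : P ≪ Q)
    (g : X → ℝ≥0∞) (hg : Measurable g) (hver : g =ᵐ[Q] P.rnDeriv Q)
    (T : ℝ≥0∞ → Y) (hTmeas : Measurable T) (hTinj : Function.Injective T) :
    ∀ φ : ℝ≥0∞ → ℝ≥0∞, Measurable φ →
      ∫⁻ y, φ ((P.map (T ∘ g)).rnDeriv (Q.map (T ∘ g)) y) ∂(Q.map (T ∘ g))
        = ∫⁻ x, φ (g x) ∂Q := by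
  intro φ hφ
  have hTemb : MeasurableEmbedding T := hTmeas.measurableEmbedding hTinj
  set h : Y → ℝ≥0∞ := Function.extend T id (fun _ => 0) with hh
  have hhmeas : Measurable h :=
    hTemb.measurable_extend measurable_id measurable_const
  have hhT : ∀ t, h (T t) = t := fun t => hTinj.extend_apply _ _ t
  have hSmeas : Measurable (T ∘ g) := hTmeas.comp hg
  -- P.map (T∘g) = (Q.map (T∘g)).withDensity h
  have key : P.map (T ∘ g) = (Q.map (T ∘ g)).withDensity h := by
    ext A hA
    rw [Measure.map_apply hSmeas hA, withDensity_apply _ hA,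
      MeasureTheory.setLIntegral_map hA hhmeas hSmeas]
    have : ∀ x, h ((T ∘ g) x) = g x := fun x => hhT (g x)
    simp_rw [this]
    have h1 : ∫⁻ x in (T ∘ g) ⁻¹' A, g x ∂Q
        = ∫⁻ x in (T ∘ g) ⁻¹' A, P.rnDeriv Q x ∂Q :=
      lintegral_congr_ae (ae_restrict_of_ae hver)
    rw [h1, Measure.setLIntegral_rnDeriv hPQ]
  have hrn : (P.map (T ∘ g)).rnDeriv (Q.map (T ∘ g)) =ᵐ[Q.map (T ∘ g)] h := by
    rw [key]
    exact Measure.rnDeriv_withDensity _ hhmeas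
  calc ∫⁻ y, φ ((P.map (T ∘ g)).rnDeriv (Q.map (T ∘ g)) y) ∂(Q.map (T ∘ g))
      = ∫⁻ y, φ (h y) ∂(Q.map (T ∘ g)) :=
        lintegral_congr_ae (hrn.mono fun y hy => by simp only [hy])
    _ = ∫⁻ x, φ (h ((T ∘ g) x)) ∂Q := lintegral_map (hφ.comp hhmeas) hSmeas
    _ = ∫⁻ x, φ (g x) ∂Q := by simp_rw [Function.comp_apply, hhT]
end

section
/- Let P and Q be probability measures on a standard Borel space X with P ≪ Q, let g : X → [0,∞] be a measurable version of dP/dQ, and define the relative density ratio map T : [0,∞] → [0,2] by T(u) = 2u/(u+1) for finite u and T(∞) = 2, and set r = T ∘ g (so r is a measurable version of the relative density ratio 2·dP/d(P+Q) up to normalization). Then for every measurable function φ : [0,∞] → [0,∞], ∫ φ( d(r♯P)/d(r♯Q)(y) ) d(r♯Q)(y) = ∫ φ( g(x) ) dQ(x); that is, the one-dimensional pushforward distributions r♯P and r♯Q preserve the φ-divergence of P and Q: D_φ(r♯P ∥ r♯Q) = D_φ(P ∥ Q). -/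
/-!
`T` is injective with measurable left inverse `S(y) = y / (2 - y)`, so `g = S ∘ r` factors through
`r = T ∘ g`. Hence `P = Q.withDensity (S ∘ r)` pushes forward to `r♯P = (r♯Q).withDensity S`, i.e.
`d(r♯P)/d(r♯Q) = S` holds `r♯Q`-a.e., and the change of variables `y = r x` turns
`∫ φ(S y) d(r♯Q)(y)` into `∫ φ(g x) dQ(x)`.
-/

open MeasureTheory
open scoped ENNReal

/-- The relative-density-ratio transformation `T(u) = 2u/(u+1)` for finite `u`,
with `T(∞) = 2`, mapping `[0,∞]` into `[0,2]`. -/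
noncomputable def rdrTransform : ℝ≥0∞ → ℝ≥0∞ :=
  fun u => if u = ∞ then 2 else 2 * u / (u + 1)

noncomputable def rdrInverse (y : ℝ≥0∞) : ℝ≥0∞ := y / (2 - y)

lemma measurable_rdrTransform : Measurable rdrTransform :=
  Measurable.ite (measurableSet_singleton _) measurable_const
    ((measurable_const.mul measurable_id).div (measurable_id.add measurable_const))

lemma measurable_rdrInverse : Measurable rdrInverse :=
  measurable_id.div (measurable_const.sub measurable_id)

lemma rdrInverse_rdrTransform (u : ℝ≥0∞) : rdrInverse (rdrTransform u) = u := by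
  rcases eq_or_ne u ∞ with rfl | hu
  · simp [rdrInverse, rdrTransform, ENNReal.div_zero]
  have hd0 : u + 1 ≠ 0 := by simp
  have hdt : u + 1 ≠ ∞ := by simp [hu]
  have hT : rdrTransform u = 2 * u / (u + 1) := if_neg hu
  have hT_ne_top : 2 * u / (u + 1) ≠ ∞ := by
    simp [ENNReal.div_eq_top, hd0, ENNReal.mul_eq_top, hu]
  -- `2 - T u = 2 / (u + 1)`, so `T u / (2 - T u) = 2u / 2 = u`.
  have hsum : 2 * u / (u + 1) + 2 / (u + 1) = 2 := by
    rw [← ENNReal.add_div, show 2 * u + 2 = (u + 1) * 2 by ring, mul_div_assoc,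
      ENNReal.mul_div_cancel hd0 hdt]
  have hsub : 2 - 2 * u / (u + 1) = 2 / (u + 1) :=
    ENNReal.sub_eq_of_eq_add hT_ne_top (by rw [add_comm, hsum])
  rw [rdrInverse, hT, hsub, eq_comm,
    ENNReal.eq_div_iff (by simp [hdt]) (by simp [ENNReal.div_eq_top, hd0]),
    div_eq_mul_inv, div_eq_mul_inv, mul_right_comm]

namespace MeasureTheory.Measure

variable {X Y : Type*} [MeasurableSpace X] [MeasurableSpace Y] {f : X → Y} {S : Y → ℝ≥0∞}

lemma map_withDensity_comp (μ : Measure X) (hf : Measurable f) (hS : Measurable S) :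
    (μ.withDensity (S ∘ f)).map f = (μ.map f).withDensity S := by
  ext A hA
  rw [map_apply hf hA, withDensity_apply _ hA, setLIntegral_map hA hS hf,
    withDensity_apply _ (hf hA)]
  rfl

variable {P Q : Measure X} [P.HaveLebesgueDecomposition Q] [IsFiniteMeasure Q]

lemma rnDeriv_map_ae_eq_of_rnDeriv_ae_eq_comp (hPQ : P ≪ Q) (hf : Measurable f)
    (hS : Measurable S) (hPQ_density : P.rnDeriv Q =ᵐ[Q] S ∘ f) :
    (P.map f).rnDeriv (Q.map f) =ᵐ[Q.map f] S := by
  have hP : P = Q.withDensity (S ∘ f) := by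
    rw [← withDensity_congr_ae hPQ_density, withDensity_rnDeriv_eq P Q hPQ]
  rw [hP, map_withDensity_comp Q hf hS]
  exact rnDeriv_withDensity _ hS

lemma lintegral_comp_rnDeriv_map_of_rnDeriv_ae_eq_comp (hPQ : P ≪ Q) (hf : Measurable f)
    (hS : Measurable S) (hPQ_density : P.rnDeriv Q =ᵐ[Q] S ∘ f)
    {φ : ℝ≥0∞ → ℝ≥0∞} (hφ : Measurable φ) :
    ∫⁻ y, φ ((P.map f).rnDeriv (Q.map f) y) ∂(Q.map f) = ∫⁻ x, φ (S (f x)) ∂Q := by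
  calc ∫⁻ y, φ ((P.map f).rnDeriv (Q.map f) y) ∂(Q.map f)
      = ∫⁻ y, φ (S y) ∂(Q.map f) := lintegral_congr_ae <| by
        filter_upwards [rnDeriv_map_ae_eq_of_rnDeriv_ae_eq_comp hPQ hf hS hPQ_density]
          with y hy
        rw [hy]
    _ = ∫⁻ x, φ (S (f x)) ∂Q := lintegral_map (hφ.comp hS) hf

end MeasureTheory.Measure

theorem phi_divergence_preserved_by_relative_density_ratio_general
    {X : Type*} [MeasurableSpace X]
    (P Q : Measure X) [IsProbabilityMeasure P] [IsProbabilityMeasure Q]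
    (hPQ : P ≪ Q)
    (g : X → ℝ≥0∞) (hg : Measurable g) (hver : g =ᵐ[Q] P.rnDeriv Q) :
    ∀ φ : ℝ≥0∞ → ℝ≥0∞, Measurable φ →
      ∫⁻ y, φ ((P.map (rdrTransform ∘ g)).rnDeriv (Q.map (rdrTransform ∘ g)) y)
          ∂(Q.map (rdrTransform ∘ g))
        = ∫⁻ x, φ (g x) ∂Q := by
  intro φ hφ
  have hg_factor : rdrInverse ∘ rdrTransform ∘ g = g :=
    funext fun x => rdrInverse_rdrTransform (g x)
  have hPQ_density : P.rnDeriv Q =ᵐ[Q] rdrInverse ∘ rdrTransform ∘ g := by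
    rw [hg_factor]
    exact hver.symm
  simpa only [Function.comp_apply, rdrInverse_rdrTransform] using
    Measure.lintegral_comp_rnDeriv_map_of_rnDeriv_ae_eq_comp hPQ
      (measurable_rdrTransform.comp hg) measurable_rdrInverse hPQ_density hφ

/-- Let `P ≪ Q` be probability measures on a standard Borel space and
`g` a measurable version of `dP/dQ`. With `r = T ∘ g` where `T(u) = 2u/(u+1)`
(`T(∞) = 2`) — so that `r` is a measurable version of the relative density ratio —
for every measurable `φ : [0,∞] → [0,∞]`,
`∫ φ(d(r♯P)/d(r♯Q)) d(r♯Q) = ∫ φ(g) dQ`; i.e. the one-dimensional pushforwards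
`r♯P, r♯Q` preserve the φ-divergence: `D_φ(r♯P ∥ r♯Q) = D_φ(P ∥ Q)`. -/
theorem phi_divergence_preserved_by_relative_density_ratio
    {X : Type*} [MeasurableSpace X] [StandardBorelSpace X]
    (P Q : Measure X) [IsProbabilityMeasure P] [IsProbabilityMeasure Q]
    (hPQ : P ≪ Q)
    (g : X → ℝ≥0∞) (hg : Measurable g) (hver : g =ᵐ[Q] P.rnDeriv Q) :
    ∀ φ : ℝ≥0∞ → ℝ≥0∞, Measurable φ →
      ∫⁻ y, φ ((P.map (rdrTransform ∘ g)).rnDeriv (Q.map (rdrTransform ∘ g)) y)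
          ∂(Q.map (rdrTransform ∘ g))
        = ∫⁻ x, φ (g x) ∂Q :=
  phi_divergence_preserved_by_relative_density_ratio_general P Q hPQ g hg hver
end

section
/- Let μ be a σ-finite measure on X and let p, q : X → [0,∞) be probability densities with respect to μ; write dP = p dμ and dQ = q dμ. Let g : X → (0,∞) be a measurable function such that g^{−1/2} is P-integrable and g^{1/2} is Q-integrable. Then 1 − (1/2)∫ g^{−1/2} dP − (1/2)∫ g^{1/2} dQ ≤ H²(P,Q), where H²(P,Q) = (1/2)∫ (√p − √q)² dμ. Moreover, equality holds if and only if p(x) = g(x)·q(x) for μ-almost every x (i.e. g is a version of the density ratio p/q). In particular, g₀ = p/q is the unique (up to μ-null modification) global minimizer of the balancing loss g ↦ (1/2)∫ g^{−1/2} dP + (1/2)∫ g^{1/2} dQ, whose minimum value is ∫ √(p q) dμ. -/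
open MeasureTheory

/-- Variational form after the change of variable `g = (1−2f)^{−2}`.
For probability densities `p, q` w.r.t. σ-finite `μ` and measurable `g > 0` with
`g^{−1/2}` P-integrable and `g^{1/2}` Q-integrable,
`1 − (1/2)∫ g^{−1/2} dP − (1/2)∫ g^{1/2} dQ ≤ H²(P,Q)`, with equality iff
`p = g·q` μ-a.e.; in particular the density ratio is the unique (up to null sets)
minimizer of the balancing loss, whose minimum value is `∫ √(pq) dμ`. -/
theorem balancing_loss_variational_form {X : Type*} [MeasurableSpace X]
    (μ : Measure X) [SigmaFinite μ]
    (p q : X → ℝ) (hpm : Measurable p) (hqm : Measurable q)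
    (hp0 : ∀ x, 0 ≤ p x) (hq0 : ∀ x, 0 ≤ q x)
    (hpInt : Integrable p μ) (hqInt : Integrable q μ)
    (hp1 : ∫ x, p x ∂μ = 1) (hq1 : ∫ x, q x ∂μ = 1)
    (g : X → ℝ) (hgm : Measurable g) (hgpos : ∀ x, 0 < g x)
    (hgP : Integrable (fun x => (Real.sqrt (g x))⁻¹ * p x) μ)
    (hgQ : Integrable (fun x => Real.sqrt (g x) * q x) μ) :
    (1 - (1 / 2) * (∫ x, (Real.sqrt (g x))⁻¹ * p x ∂μ)
        - (1 / 2) * (∫ x, Real.sqrt (g x) * q x ∂μ)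
      ≤ (1 / 2) * ∫ x, (Real.sqrt (p x) - Real.sqrt (q x)) ^ 2 ∂μ)
    ∧ (1 - (1 / 2) * (∫ x, (Real.sqrt (g x))⁻¹ * p x ∂μ)
          - (1 / 2) * (∫ x, Real.sqrt (g x) * q x ∂μ)
        = (1 / 2) * ∫ x, (Real.sqrt (p x) - Real.sqrt (q x)) ^ 2 ∂μ
        ↔ (∀ᵐ x ∂μ, p x = g x * q x))
    ∧ ((∀ᵐ x ∂μ, p x = g x * q x) →
        (1 / 2) * (∫ x, (Real.sqrt (g x))⁻¹ * p x ∂μ)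
          + (1 / 2) * (∫ x, Real.sqrt (g x) * q x ∂μ)
        = ∫ x, Real.sqrt (p x * q x) ∂μ) := by
  classical
  set s : X → ℝ := fun x => Real.sqrt (g x) with hs_def
  have hs_pos : ∀ x, 0 < s x := fun x => Real.sqrt_pos.2 (hgpos x)
  have hs_sq : ∀ x, s x ^ 2 = g x := fun x => Real.sq_sqrt (hgpos x).le
  -- pointwise AM-GM
  have hpt : ∀ x, 2 * Real.sqrt (p x * q x)
      ≤ (s x)⁻¹ * p x + s x * q x := by
    intro x
    have hsx := hs_pos x
    have ha : (0:ℝ) ≤ (s x)⁻¹ * p x := mul_nonneg (inv_nonneg.2 hsx.le) (hp0 x)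
    have hb : (0:ℝ) ≤ s x * q x := mul_nonneg hsx.le (hq0 x)
    have hab : ((s x)⁻¹ * p x) * (s x * q x) = p x * q x := by
      field_simp
    have h1 : Real.sqrt (p x * q x)
        = Real.sqrt ((s x)⁻¹ * p x) * Real.sqrt (s x * q x) := by
      rw [← Real.sqrt_mul ha, hab]
    rw [h1]
    nlinarith [sq_nonneg (Real.sqrt ((s x)⁻¹ * p x) - Real.sqrt (s x * q x)),
      Real.sq_sqrt ha, Real.sq_sqrt hb]
  -- for p = g q : both terms equal sqrt(pq)
  have hcase : ∀ x, p x = g x * q x →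
      Real.sqrt (p x * q x) = s x * q x ∧ (s x)⁻¹ * p x = s x * q x := by
    intro x h
    have hsx := hs_pos x
    constructor
    · rw [h, ← hs_sq x,
        show s x ^ 2 * q x * q x = (s x * q x) ^ 2 by ring,
        Real.sqrt_sq (mul_nonneg hsx.le (hq0 x))]
    · rw [h, ← hs_sq x]; field_simp
  -- integrability of sqrt(pq)
  have hsum : Integrable (fun x => (s x)⁻¹ * p x + s x * q x) μ := hgP.add hgQ
  have hsqrtm : Measurable (fun x => Real.sqrt (p x * q x)) :=
    (hpm.mul hqm).sqrt
  have hSInt : Integrable (fun x => Real.sqrt (p x * q x)) μ := by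
    refine Integrable.mono' hsum hsqrtm.aestronglyMeasurable
      (Filter.Eventually.of_forall fun x => ?_)
    have h0 : (0:ℝ) ≤ Real.sqrt (p x * q x) := Real.sqrt_nonneg _
    have := hpt x
    rw [Real.norm_eq_abs, abs_of_nonneg h0]
    linarith
  set I := ∫ x, Real.sqrt (p x * q x) ∂μ with hI_def
  set A := ∫ x, (s x)⁻¹ * p x ∂μ with hA_def
  set B := ∫ x, s x * q x ∂μ with hB_def
  -- compute Hellinger integral
  have hH : ∫ x, (Real.sqrt (p x) - Real.sqrt (q x)) ^ 2 ∂μ = 2 - 2 * I := by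
    have heq : ∀ x, (Real.sqrt (p x) - Real.sqrt (q x)) ^ 2
        = p x + q x - 2 * Real.sqrt (p x * q x) := by
      intro x
      rw [sub_sq, Real.sq_sqrt (hp0 x), Real.sq_sqrt (hq0 x),
        Real.sqrt_mul (hp0 x)]
      ring
    calc ∫ x, (Real.sqrt (p x) - Real.sqrt (q x)) ^ 2 ∂μ
        = ∫ x, (p x + q x - 2 * Real.sqrt (p x * q x)) ∂μ :=
          integral_congr_ae (Filter.Eventually.of_forall heq)
      _ = (∫ x, p x ∂μ) + (∫ x, q x ∂μ)
            - 2 * ∫ x, Real.sqrt (p x * q x) ∂μ := by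
          have hpq : Integrable (fun x => p x + q x) μ := hpInt.add hqInt
          rw [integral_sub hpq (hSInt.const_mul 2),
            integral_add hpInt hqInt, integral_const_mul]
      _ = 2 - 2 * I := by rw [hp1, hq1, ← hI_def]; ring
  -- key integral inequality
  have hIAB : 2 * I ≤ A + B := by
    have := integral_mono (hSInt.const_mul 2) hsum hpt
    rwa [integral_const_mul, integral_add hgP hgQ] at this
  have hdiff : Integrable
      (fun x => ((s x)⁻¹ * p x + s x * q x) - 2 * Real.sqrt (p x * q x)) μ :=
    (hgP.add hgQ).sub (hSInt.const_mul 2)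
  have hdiff_int : ∫ x, (((s x)⁻¹ * p x + s x * q x)
      - 2 * Real.sqrt (p x * q x)) ∂μ = (A + B) - 2 * I := by
    rw [integral_sub hsum (hSInt.const_mul 2),
      integral_add hgP hgQ, integral_const_mul]
  -- pointwise equality characterization
  have hpt_eq : ∀ x, (((s x)⁻¹ * p x + s x * q x)
      - 2 * Real.sqrt (p x * q x) = 0) ↔ p x = g x * q x := by
    intro x
    have hsx := hs_pos x
    constructor
    · intro h
      have ha : (0:ℝ) ≤ (s x)⁻¹ * p x := mul_nonneg (inv_nonneg.2 hsx.le) (hp0 x)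
      have hb : (0:ℝ) ≤ s x * q x := mul_nonneg hsx.le (hq0 x)
      have hab : ((s x)⁻¹ * p x) * (s x * q x) = p x * q x := by
        field_simp
      have h1 : Real.sqrt (p x * q x)
          = Real.sqrt ((s x)⁻¹ * p x) * Real.sqrt (s x * q x) := by
        rw [← Real.sqrt_mul ha, hab]
      rw [h1] at h
      have h2 : ((s x)⁻¹ * p x) = (s x * q x) := by
        nlinarith [sq_nonneg (Real.sqrt ((s x)⁻¹ * p x) - Real.sqrt (s x * q x)),
          Real.sq_sqrt ha, Real.sq_sqrt hb]
      have h3 : p x = s x * (s x * q x) := by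
        field_simp at h2
        nlinarith [h2]
      rw [h3, ← mul_assoc, ← sq, hs_sq x]
    · intro h
      obtain ⟨hq', hp'⟩ := hcase x h
      rw [hq', hp']
      ring
  have hgap_nonneg : ∀ x, 0 ≤ ((s x)⁻¹ * p x + s x * q x)
      - 2 * Real.sqrt (p x * q x) := fun x => by linarith [hpt x]
  have hzero_iff : ∫ x, (((s x)⁻¹ * p x + s x * q x)
      - 2 * Real.sqrt (p x * q x)) ∂μ = 0 ↔ (∀ᵐ x ∂μ, p x = g x * q x) := by
    rw [integral_eq_zero_iff_of_nonneg hgap_nonneg hdiff]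
    constructor
    · intro h; filter_upwards [h] with x hx; exact (hpt_eq x).1 hx
    · intro h; filter_upwards [h] with x hx; exact (hpt_eq x).2 hx
  refine ⟨?_, ?_, ?_⟩
  · rw [hH]; linarith
  · rw [hH, ← hzero_iff, hdiff_int]
    constructor
    · intro h; linarith
    · intro h; linarith
  · intro h
    have hAI : A = I := integral_congr_ae <| by
      filter_upwards [h] with x hx
      obtain ⟨hq', hp'⟩ := hcase x hx
      rw [hp', ← hq']
    have hBI : B = I := integral_congr_ae <| by
      filter_upwards [h] with x hx
      exact ((hcase x hx).1).symm
    rw [hAI, hBI]; ring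
end

section
/- Let P and Q be probability measures on X with P ≪ Q and g₀ a measurable version of dP/dQ. Let g : X → (0,∞) be measurable, and assume g^{1/2} and g₀^{1/2} are Q-integrable and g^{−1/2} and g₀^{−1/2} are P-integrable. Then the pseudo-distance admits the representation d(g,g₀) := ∫ (g^{1/2} − g₀^{1/2}) dQ + ∫ (g^{−1/2} − g₀^{−1/2}) dP = ∫ (√g − √g₀)² / √g dQ. In particular d(g,g₀) ≥ 0, with d(g,g₀) = 0 iff g = g₀ Q-almost everywhere. -/
open MeasureTheory
open scoped ENNReal

/-- Representation of the pseudo-distance. For `P ≪ Q` with density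
ratio `g₀ = dP/dQ` and a positive candidate `g`,
`d(g,g₀) = ∫ (g^{1/2}−g₀^{1/2}) dQ + ∫ (g^{−1/2}−g₀^{−1/2}) dP
         = ∫ (√g − √g₀)²/√g dQ ≥ 0`, with `d(g,g₀) = 0` iff `g = g₀` Q-a.e. -/
theorem pseudo_distance_representation {X : Type*} [MeasurableSpace X]
    (P Q : Measure X) [IsProbabilityMeasure P] [IsProbabilityMeasure Q]
    (hPQ : P ≪ Q)
    (g0 : X → ℝ) (hg0m : Measurable g0) (hg0pos : ∀ x, 0 < g0 x)
    (hver : ∀ᵐ x ∂Q, ENNReal.ofReal (g0 x) = P.rnDeriv Q x)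
    (g : X → ℝ) (hgm : Measurable g) (hgpos : ∀ x, 0 < g x)
    (h1 : Integrable (fun x => Real.sqrt (g x)) Q)
    (h2 : Integrable (fun x => Real.sqrt (g0 x)) Q)
    (h3 : Integrable (fun x => (Real.sqrt (g x))⁻¹) P)
    (h4 : Integrable (fun x => (Real.sqrt (g0 x))⁻¹) P) :
    ((∫ x, (Real.sqrt (g x) - Real.sqrt (g0 x)) ∂Q)
        + ∫ x, ((Real.sqrt (g x))⁻¹ - (Real.sqrt (g0 x))⁻¹) ∂P
      = ∫ x, (Real.sqrt (g x) - Real.sqrt (g0 x)) ^ 2 / Real.sqrt (g x) ∂Q)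
    ∧ (0 ≤ (∫ x, (Real.sqrt (g x) - Real.sqrt (g0 x)) ∂Q)
        + ∫ x, ((Real.sqrt (g x))⁻¹ - (Real.sqrt (g0 x))⁻¹) ∂P)
    ∧ ((∫ x, (Real.sqrt (g x) - Real.sqrt (g0 x)) ∂Q)
          + (∫ x, ((Real.sqrt (g x))⁻¹ - (Real.sqrt (g0 x))⁻¹) ∂P) = 0
        ↔ g =ᵐ[Q] g0) := by
  set sg : X → ℝ := fun x => Real.sqrt (g x) with hsg
  set sg0 : X → ℝ := fun x => Real.sqrt (g0 x) with hsg0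
  have hsgpos : ∀ x, 0 < sg x := fun x => Real.sqrt_pos.mpr (hgpos x)
  have hsg0pos : ∀ x, 0 < sg0 x := fun x => Real.sqrt_pos.mpr (hg0pos x)
  have hsq : ∀ x, sg x ^ 2 = g x := fun x => Real.sq_sqrt (hgpos x).le
  have hsq0 : ∀ x, sg0 x ^ 2 = g0 x := fun x => Real.sq_sqrt (hg0pos x).le
  have hfmeas : Measurable fun x => (g0 x).toNNReal := hg0m.real_toNNReal
  have hP : P = Q.withDensity (fun x => ((g0 x).toNNReal : ℝ≥0∞)) := by
    rw [← Measure.withDensity_rnDeriv_eq P Q hPQ]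
    exact (withDensity_congr_ae hver).symm
  -- transfer of integrals from P to Q
  have hint : ∀ φ : X → ℝ, ∫ x, φ x ∂P = ∫ x, g0 x * φ x ∂Q := by
    intro φ
    rw [hP, integral_withDensity_eq_integral_smul hfmeas]
    refine integral_congr_ae (Filter.Eventually.of_forall fun x => ?_)
    simp [NNReal.smul_def, Real.coe_toNNReal _ (hg0pos x).le]
  have hintg : ∀ φ : X → ℝ, Integrable φ P ↔ Integrable (fun x => g0 x * φ x) Q := by
    intro φ
    rw [hP, integrable_withDensity_iff_integrable_smul hfmeas]
    constructor <;> intro h <;> refine h.congr (Filter.Eventually.of_forall fun x => ?_) <;>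
      simp [NNReal.smul_def, Real.coe_toNNReal _ (hg0pos x).le]
  -- the pointwise identity
  have hpt : ∀ x, (sg x - sg0 x) + g0 x * ((sg x)⁻¹ - (sg0 x)⁻¹)
      = (sg x - sg0 x) ^ 2 / sg x := by
    intro x
    have h0 := (hsgpos x).ne'
    have h0' := (hsg0pos x).ne'
    rw [← hsq0 x]
    field_simp
    ring
  have hI3 : Integrable (fun x => g0 x * ((sg x)⁻¹ - (sg0 x)⁻¹)) Q :=
    (hintg _).mp (h3.sub h4)
  have h12 : Integrable (fun x => sg x - sg0 x) Q := h1.sub h2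
  have hsum : (∫ x, (sg x - sg0 x) ∂Q) + ∫ x, ((sg x)⁻¹ - (sg0 x)⁻¹) ∂P
      = ∫ x, (sg x - sg0 x) ^ 2 / sg x ∂Q := by
    rw [hint, ← integral_add h12 hI3]
    exact integral_congr_ae (Filter.Eventually.of_forall fun x => hpt x)
  refine ⟨hsum, ?_, ?_⟩
  · rw [hsum]
    exact integral_nonneg fun x => div_nonneg (sq_nonneg _) (hsgpos x).le
  · rw [hsum]
    have hInt : Integrable (fun x => (sg x - sg0 x) ^ 2 / sg x) Q :=
      (h12.add hI3).congr (Filter.Eventually.of_forall fun x => hpt x)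
    rw [integral_eq_zero_iff_of_nonneg
        (fun x => div_nonneg (sq_nonneg _) (hsgpos x).le) hInt]
    constructor
    · intro h
      filter_upwards [h] with x hx
      have hx' : (sg x - sg0 x) ^ 2 / sg x = 0 := hx
      have : sg x = sg0 x := by
        have := (div_eq_zero_iff.mp hx').resolve_right (hsgpos x).ne'
        have := pow_eq_zero_iff (n := 2) (by norm_num) |>.mp this
        linarith
      calc g x = sg x ^ 2 := (hsq x).symm
        _ = sg0 x ^ 2 := by rw [this]
        _ = g0 x := hsq0 x
    · intro h
      filter_upwards [h] with x hx
      have : sg x = sg0 x := by simp only [hsg, hsg0, hx]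
      show (sg x - sg0 x) ^ 2 / sg x = 0
      rw [this]; simp
end

section
/- Let P and Q be probability measures on X with P ≪ Q and g₀ a measurable version of dP/dQ. Let g : X → (0,∞) be measurable with g(x) ≤ M_u for all x, for some constant M_u > 0, and assume g^{1/2}, g₀^{1/2} are Q-integrable and g^{−1/2}, g₀^{−1/2} are P-integrable. Define the population objective M(g) = 1 − (1/2)∫ g^{−1/2} dP − (1/2)∫ g^{1/2} dQ and the Hellinger-type distance h_Q(g,g₀)² = ∫ (√g − √g₀)² dQ. Then M(g₀) − M(g) ≥ (1/(2√M_u)) · h_Q(g,g₀)². -/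
/-!
Change measure with `g₀ = dP/dQ`: `∫ g^{-1/2} dP = ∫ g₀ g^{-1/2} dQ` and `∫ g₀^{-1/2} dP = ∫ √g₀ dQ`.
Twice the excess objective is then `∫ (g₀ g^{-1/2} + √g - 2√g₀) dQ = ∫ (√g - √g₀)² / √g dQ`,
and `√g ≤ √M_u` bounds the integrand below by `(√g - √g₀)² / √M_u`.
-/

open MeasureTheory

section ChangeOfMeasure

variable {X : Type*} [MeasurableSpace X] {P Q : Measure X} {g0 : X → ℝ}

lemma toReal_rnDeriv_ae_eq_of_ofReal_ae_eq (hg0 : ∀ x, 0 ≤ g0 x)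
    (hver : ∀ᵐ x ∂Q, ENNReal.ofReal (g0 x) = P.rnDeriv Q x) :
    ∀ᵐ x ∂Q, (P.rnDeriv Q x).toReal = g0 x := by
  filter_upwards [hver] with x hx
  rw [← hx, ENNReal.toReal_ofReal (hg0 x)]

variable [P.HaveLebesgueDecomposition Q] [SigmaFinite P]

lemma integral_mul_eq_integral_of_toReal_rnDeriv (hPQ : P ≪ Q)
    (hg0 : ∀ᵐ x ∂Q, (P.rnDeriv Q x).toReal = g0 x) (f : X → ℝ) :
    ∫ x, g0 x * f x ∂Q = ∫ x, f x ∂P := by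
  rw [← integral_toReal_rnDeriv_mul hPQ]
  refine integral_congr_ae ?_
  filter_upwards [hg0] with x hx
  rw [hx]

lemma MeasureTheory.Integrable.mul_of_toReal_rnDeriv {f : X → ℝ} (hf : Integrable f P) (hPQ : P ≪ Q)
    (hg0 : ∀ᵐ x ∂Q, (P.rnDeriv Q x).toReal = g0 x) :
    Integrable (fun x => g0 x * f x) Q := by
  refine ((integrable_toReal_rnDeriv_mul_iff hPQ).2 hf).congr ?_
  filter_upwards [hg0] with x hx
  rw [hx]

end ChangeOfMeasure

lemma sq_sub_sqrt_div_sqrt {s t : ℝ} (hs : 0 < s) (ht : 0 ≤ t) :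
    (√s - √t) ^ 2 / √s = t * (√s)⁻¹ + √s - 2 * √t := by
  have hs' : √s ≠ 0 := (Real.sqrt_pos.2 hs).ne'
  field_simp
  rw [sub_sq, Real.sq_sqrt hs.le, Real.sq_sqrt ht]
  ring

section HellingerIntegrand

variable {X : Type*} [MeasurableSpace X] {μ : Measure X} {g g0 : X → ℝ}

lemma integrable_sq_sub_sqrt_div_sqrt (hg : ∀ x, 0 < g x) (hg0 : ∀ x, 0 ≤ g0 x)
    (hA : Integrable (fun x => g0 x * (√(g x))⁻¹) μ) (h1 : Integrable (fun x => √(g x)) μ)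
    (h2 : Integrable (fun x => √(g0 x)) μ) :
    Integrable (fun x => (√(g x) - √(g0 x)) ^ 2 / √(g x)) μ := by
  simp_rw [sq_sub_sqrt_div_sqrt (hg _) (hg0 _)]
  exact (hA.add h1).sub (h2.const_mul 2)

lemma integral_sq_sub_sqrt_div_sqrt (hg : ∀ x, 0 < g x) (hg0 : ∀ x, 0 ≤ g0 x)
    (hA : Integrable (fun x => g0 x * (√(g x))⁻¹) μ) (h1 : Integrable (fun x => √(g x)) μ)
    (h2 : Integrable (fun x => √(g0 x)) μ) :
    ∫ x, (√(g x) - √(g0 x)) ^ 2 / √(g x) ∂μ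
      = ∫ x, g0 x * (√(g x))⁻¹ ∂μ + ∫ x, √(g x) ∂μ - 2 * ∫ x, √(g0 x) ∂μ := by
  simp_rw [sq_sub_sqrt_div_sqrt (hg _) (hg0 _)]
  rw [integral_sub (by exact hA.add h1) (h2.const_mul 2), integral_add hA h1, integral_const_mul]

end HellingerIntegrand

lemma integral_div_const_le_integral_div {X : Type*} [MeasurableSpace X] {μ : Measure X}
    {f s : X → ℝ} {c : ℝ} (hf : ∀ x, 0 ≤ f x) (hs : ∀ x, 0 < s x) (hsc : ∀ x, s x ≤ c)
    (hint : Integrable (fun x => f x / s x) μ) :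
    (∫ x, f x ∂μ) / c ≤ ∫ x, f x / s x ∂μ := by
  rw [← integral_div]
  exact integral_mono_of_nonneg (ae_of_all _ fun x => div_nonneg (hf x) ((hs x).trans_le (hsc x)).le)
    hint (ae_of_all _ fun x => div_le_div_of_nonneg_left (hf x) (hs x) (hsc x))

theorem population_objective_dominates_hellinger_general {X : Type*} [MeasurableSpace X]
    (P Q : Measure X) [IsProbabilityMeasure P] [IsProbabilityMeasure Q]
    (hPQ : P ≪ Q)
    (g0 : X → ℝ) (hg0pos : ∀ x, 0 < g0 x)
    (hver : ∀ᵐ x ∂Q, ENNReal.ofReal (g0 x) = P.rnDeriv Q x)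
    (g : X → ℝ) (hgpos : ∀ x, 0 < g x)
    (Mu : ℝ) (hgMu : ∀ x, g x ≤ Mu)
    (h1 : Integrable (fun x => Real.sqrt (g x)) Q)
    (h2 : Integrable (fun x => Real.sqrt (g0 x)) Q)
    (h3 : Integrable (fun x => (Real.sqrt (g x))⁻¹) P) :
    (1 - (1 / 2) * (∫ x, (Real.sqrt (g0 x))⁻¹ ∂P)
        - (1 / 2) * (∫ x, Real.sqrt (g0 x) ∂Q))
      - (1 - (1 / 2) * (∫ x, (Real.sqrt (g x))⁻¹ ∂P)
          - (1 / 2) * (∫ x, Real.sqrt (g x) ∂Q))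
    ≥ (1 / (2 * Real.sqrt Mu)) *
        ∫ x, (Real.sqrt (g x) - Real.sqrt (g0 x)) ^ 2 ∂Q := by
  have hg0 : ∀ x, 0 ≤ g0 x := fun x => (hg0pos x).le
  have hdens := toReal_rnDeriv_ae_eq_of_ofReal_ae_eq hg0 hver
  have hA := integral_mul_eq_integral_of_toReal_rnDeriv hPQ hdens fun x => (√(g x))⁻¹
  have hB : ∫ x, √(g0 x) ∂Q = ∫ x, (√(g0 x))⁻¹ ∂P := by
    rw [← integral_mul_eq_integral_of_toReal_rnDeriv hPQ hdens]
    simp_rw [← div_eq_mul_inv, Real.div_sqrt]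
  have hIA := h3.mul_of_toReal_rnDeriv hPQ hdens
  have hsplit := integral_sq_sub_sqrt_div_sqrt hgpos hg0 hIA h1 h2
  have hbound := integral_div_const_le_integral_div (μ := Q) (fun x => sq_nonneg _)
    (fun x => Real.sqrt_pos.2 (hgpos x)) (fun x => Real.sqrt_le_sqrt (hgMu x))
    (integrable_sq_sub_sqrt_div_sqrt hgpos hg0 hIA h1 h2)
  rw [ge_iff_le, show ∀ I : ℝ, 1 / (2 * √Mu) * I = I / √Mu / 2 by intro I; ring]
  linarith

/-- The excess of the population variational squared-Hellinger
objective `M(g) = 1 − (1/2)∫ g^{−1/2} dP − (1/2)∫ g^{1/2} dQ` at the true density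
ratio `g₀ = dP/dQ` over a candidate `g ≤ M_u` dominates the Hellinger-type distance:
`M(g₀) − M(g) ≥ (1/(2√M_u)) · ∫ (√g − √g₀)² dQ`. -/
theorem population_objective_dominates_hellinger {X : Type*} [MeasurableSpace X]
    (P Q : Measure X) [IsProbabilityMeasure P] [IsProbabilityMeasure Q]
    (hPQ : P ≪ Q)
    (g0 : X → ℝ) (hg0m : Measurable g0) (hg0pos : ∀ x, 0 < g0 x)
    (hver : ∀ᵐ x ∂Q, ENNReal.ofReal (g0 x) = P.rnDeriv Q x)
    (g : X → ℝ) (hgm : Measurable g) (hgpos : ∀ x, 0 < g x)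
    (Mu : ℝ) (hMu : 0 < Mu) (hgMu : ∀ x, g x ≤ Mu)
    (h1 : Integrable (fun x => Real.sqrt (g x)) Q)
    (h2 : Integrable (fun x => Real.sqrt (g0 x)) Q)
    (h3 : Integrable (fun x => (Real.sqrt (g x))⁻¹) P)
    (h4 : Integrable (fun x => (Real.sqrt (g0 x))⁻¹) P) :
    (1 - (1 / 2) * (∫ x, (Real.sqrt (g0 x))⁻¹ ∂P)
        - (1 / 2) * (∫ x, Real.sqrt (g0 x) ∂Q))
      - (1 - (1 / 2) * (∫ x, (Real.sqrt (g x))⁻¹ ∂P)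
          - (1 / 2) * (∫ x, Real.sqrt (g x) ∂Q))
    ≥ (1 / (2 * Real.sqrt Mu)) *
        ∫ x, (Real.sqrt (g x) - Real.sqrt (g0 x)) ^ 2 ∂Q :=
  population_objective_dominates_hellinger_general P Q hPQ g0 hg0pos hver g hgpos Mu hgMu h1 h2 h3
end

section
/- Let P and Q be probability measures on X with P ≪ Q and g₀ a measurable version of dP/dQ. Let M_l, M_u > 0 and let g, g₀ : X → (0,∞) be measurable with g(x) ≥ 1/M_l, g₀(x) ≥ 1/M_l, and g₀(x) ≤ M_u for all x. Then ∫ ( g^{−1/2} − g₀^{−1/2} )² dP ≤ M_l² · M_u · ∫ ( √g − √g₀ )² dQ. In particular, if h_Q(g,g₀)² := ∫ (√g − √g₀)² dQ ≤ δ², then ∫ (g^{−1/2} − g₀^{−1/2})² dP ≤ M_l² M_u δ². -/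
open MeasureTheory
open scoped ENNReal

lemma ptwise_bound (Ml Mu a b : ℝ) (hMl : 0 < Ml) (hMu : 0 < Mu)
    (ha : 1 / Ml ≤ a) (hb : 1 / Ml ≤ b) (hub : b ≤ Mu) :
    ((Real.sqrt a)⁻¹ - (Real.sqrt b)⁻¹) ^ 2 * b ≤ Ml ^ 2 * Mu * (Real.sqrt a - Real.sqrt b) ^ 2 := by
  have ha0 : 0 < a := lt_of_lt_of_le (by positivity) ha
  have hb0 : 0 < b := lt_of_lt_of_le (by positivity) hb
  have hsa : 0 < Real.sqrt a := Real.sqrt_pos.mpr ha0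
  have hsb : 0 < Real.sqrt b := Real.sqrt_pos.mpr hb0
  have h1 : ((Real.sqrt a)⁻¹ - (Real.sqrt b)⁻¹) ^ 2 * b
      = (Real.sqrt a - Real.sqrt b) ^ 2 / a := by
    have hA : Real.sqrt a ^ 2 = a := Real.sq_sqrt ha0.le
    have hB : Real.sqrt b ^ 2 = b := Real.sq_sqrt hb0.le
    have key : ∀ s t : ℝ, s ≠ 0 → t ≠ 0 → (s⁻¹ - t⁻¹) ^ 2 * t ^ 2 = (s - t) ^ 2 / s ^ 2 := by
      intro s t hs ht; field_simp; ring
    have := key (Real.sqrt a) (Real.sqrt b) hsa.ne' hsb.ne'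
    rw [hA, hB] at this
    exact this
  rw [h1]
  have hMlMu : 1 ≤ Ml * Mu := by
    have := le_trans hb hub
    rw [div_le_iff₀ hMl] at this
    linarith [this]
  have h2 : (Real.sqrt a - Real.sqrt b) ^ 2 / a ≤ Ml * (Real.sqrt a - Real.sqrt b) ^ 2 := by
    rw [div_le_iff₀ ha0]
    have : 1 ≤ Ml * a := by
      rw [div_le_iff₀ hMl] at ha; linarith
    nlinarith [sq_nonneg (Real.sqrt a - Real.sqrt b)]
  have h3 : Ml * (Real.sqrt a - Real.sqrt b) ^ 2 ≤ Ml ^ 2 * Mu * (Real.sqrt a - Real.sqrt b) ^ 2 := by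
    have : Ml ≤ Ml ^ 2 * Mu := by nlinarith
    nlinarith [sq_nonneg (Real.sqrt a - Real.sqrt b)]
  linarith

/-- Second-moment bound. For `P ≪ Q` with `dP/dQ = g₀`, and functions
`g, g₀ ≥ 1/M_l` with `g₀ ≤ M_u`,
`∫ (g^{−1/2} − g₀^{−1/2})² dP ≤ M_l² M_u ∫ (√g − √g₀)² dQ`; in particular, if
`h_Q(g,g₀)² ≤ δ²` then `∫ (g^{−1/2} − g₀^{−1/2})² dP ≤ M_l² M_u δ²`. -/
theorem second_moment_bound {X : Type*} [MeasurableSpace X]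
    (P Q : Measure X) [IsProbabilityMeasure P] [IsProbabilityMeasure Q]
    (hPQ : P ≪ Q)
    (g0 : X → ℝ) (hg0m : Measurable g0)
    (hver : ∀ᵐ x ∂Q, ENNReal.ofReal (g0 x) = P.rnDeriv Q x)
    (g : X → ℝ) (hgm : Measurable g)
    (Ml Mu : ℝ) (hMl : 0 < Ml) (hMu : 0 < Mu)
    (hglb : ∀ x, 1 / Ml ≤ g x) (hg0lb : ∀ x, 1 / Ml ≤ g0 x)
    (hg0ub : ∀ x, g0 x ≤ Mu) :
    (∫⁻ x, ENNReal.ofReal (((Real.sqrt (g x))⁻¹ - (Real.sqrt (g0 x))⁻¹) ^ 2) ∂P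
        ≤ ENNReal.ofReal (Ml ^ 2 * Mu) *
          ∫⁻ x, ENNReal.ofReal ((Real.sqrt (g x) - Real.sqrt (g0 x)) ^ 2) ∂Q)
    ∧ ∀ δ : ℝ, 0 ≤ δ →
        (∫⁻ x, ENNReal.ofReal ((Real.sqrt (g x) - Real.sqrt (g0 x)) ^ 2) ∂Q
            ≤ ENNReal.ofReal (δ ^ 2)) →
        ∫⁻ x, ENNReal.ofReal (((Real.sqrt (g x))⁻¹ - (Real.sqrt (g0 x))⁻¹) ^ 2) ∂P
          ≤ ENNReal.ofReal (Ml ^ 2 * Mu * δ ^ 2) := by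
  have hf : Measurable fun x => ENNReal.ofReal (((Real.sqrt (g x))⁻¹ - (Real.sqrt (g0 x))⁻¹) ^ 2) := by
    exact ENNReal.measurable_ofReal.comp
      (((Real.continuous_sqrt.measurable.comp hgm).inv.sub
        (Real.continuous_sqrt.measurable.comp hg0m).inv).pow_const 2)
  have key : ∫⁻ x, ENNReal.ofReal (((Real.sqrt (g x))⁻¹ - (Real.sqrt (g0 x))⁻¹) ^ 2) ∂P
      ≤ ENNReal.ofReal (Ml ^ 2 * Mu) *
        ∫⁻ x, ENNReal.ofReal ((Real.sqrt (g x) - Real.sqrt (g0 x)) ^ 2) ∂Q := by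
    rw [← lintegral_rnDeriv_mul hPQ hf.aemeasurable]
    have step1 : ∫⁻ x, P.rnDeriv Q x *
        ENNReal.ofReal (((Real.sqrt (g x))⁻¹ - (Real.sqrt (g0 x))⁻¹) ^ 2) ∂Q
        = ∫⁻ x, ENNReal.ofReal (((Real.sqrt (g x))⁻¹ - (Real.sqrt (g0 x))⁻¹) ^ 2 * g0 x) ∂Q := by
      refine lintegral_congr_ae ?_
      filter_upwards [hver] with x hx
      rw [← hx, ENNReal.ofReal_mul (by positivity), mul_comm]
    rw [step1, ← lintegral_const_mul' _ _ (by simp)]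
    refine lintegral_mono fun x => ?_
    rw [← ENNReal.ofReal_mul (by positivity)]
    exact ENNReal.ofReal_le_ofReal
      (ptwise_bound Ml Mu (g x) (g0 x) hMl hMu (hglb x) (hg0lb x) (hg0ub x))
  refine ⟨key, fun δ hδ hH => ?_⟩
  calc _ ≤ ENNReal.ofReal (Ml ^ 2 * Mu) *
        ∫⁻ x, ENNReal.ofReal ((Real.sqrt (g x) - Real.sqrt (g0 x)) ^ 2) ∂Q := key
    _ ≤ ENNReal.ofReal (Ml ^ 2 * Mu) * ENNReal.ofReal (δ ^ 2) := by
        exact mul_le_mul_right hH _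
    _ = ENNReal.ofReal (Ml ^ 2 * Mu * δ ^ 2) := by
        rw [← ENNReal.ofReal_mul (by positivity)]
end

section
/- Let P and Q be probability measures on X with P ≪ Q and g₀ a measurable version of dP/dQ. Let M_l, M_u > 0, and let g, gₙ, g₀ : X → (0,∞) be measurable functions with 1/M_l ≤ g(x) ≤ M_u, 1/M_l ≤ gₙ(x) ≤ M_u, and 1/M_l ≤ g₀(x) ≤ M_u for all x. Write h_Q(u,v)² = ∫ (√u − √v)² dQ, and set c_M = 1/(4 M_l M_u). If h_Q(gₙ, g₀) ≤ c_M · h_Q(g, gₙ), then ∫ (gₙ^{−1/2} − g^{−1/2}) dP + ∫ (gₙ^{1/2} − g^{1/2}) dQ ≤ − (1/(2√M_u)) · h_Q(g, gₙ)²; equivalently, writing D(u) = ∫ u^{−1/2} dP + ∫ u^{1/2} dQ for the (unnormalized) balancing loss, D(g) − D(gₙ) ≥ (1/(2√M_u)) h_Q(g,gₙ)². -/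
/-!
Write `a = √g`, `b = √gₙ`, `c = √g₀`, all with values in `[l, u] = [1/√M_l, √M_u]`. Since
`dP = c² dQ`, the gap is the `Q`-integral of
`c² (1/b - 1/a) + (b - a) = (a - b)(c - b)(c + b)/(ab) - (a - b)²/a`.
The last term is at most `-(a - b)²/u`. The cross term is at most `(2u/l²)|a - b||c - b|`, which
AM-GM splits into `(a - b)²/(4u)` plus a multiple of `(b - c)²`; after integration the closeness
hypothesis `h_Q(gₙ, g₀) ≤ c_M h_Q(g, gₙ)` bounds the latter by another `h_Q(g, gₙ)²/(4u)`.
-/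

open MeasureTheory Set

lemma sq_mul_inv_sub_inv_add_sub_eq {a b : ℝ} (ha : a ≠ 0) (hb : b ≠ 0) (c : ℝ) :
    c ^ 2 * (b⁻¹ - a⁻¹) + (b - a) = (a - b) * (c - b) * ((c + b) / (a * b)) - (a - b) ^ 2 / a := by
  field_simp
  ring

lemma mul_mul_div_le_sq_div_add {l u : ℝ} (hl : 0 < l) (hu : 0 < u) (x y : ℝ) :
    x * y * (2 * u / l ^ 2) ≤ x ^ 2 / (4 * u) + 4 * u ^ 3 / l ^ 4 * y ^ 2 := by
  have h : x ^ 2 / (4 * u) + 4 * u ^ 3 / l ^ 4 * y ^ 2 - x * y * (2 * u / l ^ 2)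
      = (l ^ 2 * x - 4 * u ^ 2 * y) ^ 2 / (4 * u * l ^ 4) := by
    field_simp
    ring
  have : 0 ≤ (l ^ 2 * x - 4 * u ^ 2 * y) ^ 2 / (4 * u * l ^ 4) := by positivity
  linarith

lemma sq_mul_inv_sub_inv_add_sub_le {l u a b c : ℝ} (hl : 0 < l)
    (ha : a ∈ Icc l u) (hb : b ∈ Icc l u) (hc : c ∈ Icc l u) :
    c ^ 2 * (b⁻¹ - a⁻¹) + (b - a)
      ≤ 4 * u ^ 3 / l ^ 4 * (b - c) ^ 2 - 3 / (4 * u) * (a - b) ^ 2 := by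
  have ha0 : 0 < a := hl.trans_le ha.1
  have hb0 : 0 < b := hl.trans_le hb.1
  have hu : 0 < u := ha0.trans_le ha.2
  have hfactor : (c + b) / (a * b) ≤ 2 * u / l ^ 2 := by
    rw [sq]
    exact div_le_div₀ (by positivity) (by linarith [hb.2, hc.2]) (by positivity)
      (mul_le_mul ha.1 hb.1 hl.le ha0.le)
  have hcross : (a - b) * (c - b) * ((c + b) / (a * b))
      ≤ (a - b) ^ 2 / (4 * u) + 4 * u ^ 3 / l ^ 4 * (b - c) ^ 2 := by
    calc (a - b) * (c - b) * ((c + b) / (a * b))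
        ≤ |a - b| * |c - b| * (2 * u / l ^ 2) := by
          rw [← abs_mul]
          exact mul_le_mul (le_abs_self _) hfactor
            (div_nonneg (by linarith [hb.1, hc.1]) (mul_pos ha0 hb0).le) (abs_nonneg _)
      _ ≤ (a - b) ^ 2 / (4 * u) + 4 * u ^ 3 / l ^ 4 * (b - c) ^ 2 := by
          simpa only [sq_abs, abs_sub_comm c b]
            using mul_mul_div_le_sq_div_add hl hu |a - b| |c - b|
  have hdiag : (a - b) ^ 2 / u ≤ (a - b) ^ 2 / a :=
    div_le_div_of_nonneg_left (sq_nonneg _) ha0 ha.2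
  have hsplit : (a - b) ^ 2 / (4 * u) - (a - b) ^ 2 / u = -(3 / (4 * u) * (a - b) ^ 2) := by
    field_simp
    ring
  rw [sq_mul_inv_sub_inv_add_sub_eq ha0.ne' hb0.ne']
  linarith

lemma inv_mem_Icc_inv {l u x : ℝ} (hl : 0 < l) (hx : x ∈ Icc l u) : x⁻¹ ∈ Icc u⁻¹ l⁻¹ :=
  ⟨inv_anti₀ (hl.trans_le hx.1) hx.2, inv_anti₀ hl hx.1⟩

lemma sqrt_mem_Icc_inv_sqrt {m M y : ℝ} (hy : 1 / m ≤ y ∧ y ≤ M) : √y ∈ Icc (√m)⁻¹ √M := by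
  rw [← Real.sqrt_inv, ← one_div]
  exact ⟨Real.sqrt_le_sqrt hy.1, Real.sqrt_le_sqrt hy.2⟩

section Integrals

variable {X : Type*} [MeasurableSpace X]

lemma integral_eq_integral_mul_of_ofReal_eq_rnDeriv {P Q : Measure X}
    [P.HaveLebesgueDecomposition Q] [SigmaFinite P] (hPQ : P ≪ Q) {ρ : X → ℝ} (hρ0 : ∀ x, 0 ≤ ρ x)
    (hρ : ∀ᵐ x ∂Q, ENNReal.ofReal (ρ x) = P.rnDeriv Q x) (f : X → ℝ) :
    ∫ x, f x ∂P = ∫ x, ρ x * f x ∂Q := by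
  rw [← integral_toReal_rnDeriv_mul hPQ]
  refine integral_congr_ae (hρ.mono fun x hx => ?_)
  simp only [← hx, ENNReal.toReal_ofReal (hρ0 x)]

variable {Q : Measure X} [IsFiniteMeasure Q] {l u : ℝ} {a b c : X → ℝ}

lemma integral_sq_mul_inv_sub_inv_add_integral_sub_le (hl : 0 < l)
    (ham : Measurable a) (hbm : Measurable b) (hcm : Measurable c)
    (ha : ∀ x, a x ∈ Icc l u) (hb : ∀ x, b x ∈ Icc l u) (hc : ∀ x, c x ∈ Icc l u) :
    ∫ x, c x ^ 2 * ((b x)⁻¹ - (a x)⁻¹) ∂Q + ∫ x, (b x - a x) ∂Q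
      ≤ 4 * u ^ 3 / l ^ 4 * ∫ x, (b x - c x) ^ 2 ∂Q
        - 3 / (4 * u) * ∫ x, (a x - b x) ^ 2 ∂Q := by
  have hLp : ∀ f : X → ℝ, Measurable f → (∀ x, f x ∈ Icc l u) → MemLp f ⊤ Q := fun f hfm hf =>
    memLp_of_bounded (ae_of_all _ hf) hfm.aestronglyMeasurable ⊤
  have hLp_inv : ∀ f : X → ℝ, Measurable f → (∀ x, f x ∈ Icc l u) →
      MemLp (fun x => (f x)⁻¹) ⊤ Q := fun f hfm hf =>
    memLp_of_bounded (ae_of_all _ fun x => inv_mem_Icc_inv hl (hf x)) hfm.inv.aestronglyMeasurable ⊤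
  have hA := hLp a ham ha
  have hB := hLp b hbm hb
  have hC := hLp c hcm hc
  have hint₁ : Integrable (fun x => c x ^ 2 * ((b x)⁻¹ - (a x)⁻¹)) Q := by
    convert ((hC.mul (r := ⊤) hC).mul (r := ⊤)
      ((hLp_inv b hbm hb).sub (hLp_inv a ham ha))).integrable le_top using 2 with x
    simp only [Pi.mul_apply, Pi.sub_apply]
    ring
  have hint_sub : Integrable (fun x => b x - a x) Q := (hB.sub hA).integrable le_top
  have hint_sq : ∀ {f g : X → ℝ}, MemLp f ⊤ Q → MemLp g ⊤ Q →
      Integrable (fun x => (f x - g x) ^ 2) Q := fun hf hg =>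
    (((hf.sub hg).mul (r := ⊤) (hf.sub hg)).integrable le_top).congr
      (ae_of_all _ fun x => (sq _).symm)
  rw [← integral_add hint₁ hint_sub, ← integral_const_mul,
    ← integral_const_mul,
    ← integral_sub ((hint_sq hB hC).const_mul _) ((hint_sq hA hB).const_mul _)]
  exact integral_mono (hint₁.add hint_sub)
    (((hint_sq hB hC).const_mul _).sub ((hint_sq hA hB).const_mul _))
    fun x => sq_mul_inv_sub_inv_add_sub_le hl (ha x) (hb x) (hc x)

lemma integral_sq_mul_inv_sub_inv_add_integral_sub_le_of_sqrt_integral_le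
    (hl : 0 < l) (hu : 0 < u)
    (ham : Measurable a) (hbm : Measurable b) (hcm : Measurable c)
    (ha : ∀ x, a x ∈ Icc l u) (hb : ∀ x, b x ∈ Icc l u) (hc : ∀ x, c x ∈ Icc l u)
    (hclose : √(∫ x, (b x - c x) ^ 2 ∂Q) ≤ l ^ 2 / (4 * u ^ 2) * √(∫ x, (a x - b x) ^ 2 ∂Q)) :
    ∫ x, c x ^ 2 * ((b x)⁻¹ - (a x)⁻¹) ∂Q + ∫ x, (b x - a x) ∂Q
      ≤ -(1 / (2 * u)) * ∫ x, (a x - b x) ^ 2 ∂Q := by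
  set I₁ := ∫ x, (a x - b x) ^ 2 ∂Q
  set I₂ := ∫ x, (b x - c x) ^ 2 ∂Q
  have hI₁ : 0 ≤ I₁ := integral_nonneg fun x => sq_nonneg _
  have hI₂ : 0 ≤ I₂ := integral_nonneg fun x => sq_nonneg _
  have hclose_sq : I₂ ≤ (l ^ 2 / (4 * u ^ 2)) ^ 2 * I₁ := by
    simpa only [Real.sq_sqrt hI₁, Real.sq_sqrt hI₂, mul_pow]
      using pow_le_pow_left₀ (Real.sqrt_nonneg _) hclose 2
  have hconst : 4 * u ^ 3 / l ^ 4 * (l ^ 2 / (4 * u ^ 2)) ^ 2 = 1 / (4 * u) := by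
    field_simp
  calc _ ≤ 4 * u ^ 3 / l ^ 4 * I₂ - 3 / (4 * u) * I₁ :=
        integral_sq_mul_inv_sub_inv_add_integral_sub_le hl ham hbm hcm ha hb hc
    _ ≤ 4 * u ^ 3 / l ^ 4 * ((l ^ 2 / (4 * u ^ 2)) ^ 2 * I₁) - 3 / (4 * u) * I₁ := by
        gcongr
    _ = -(1 / (2 * u)) * I₁ := by
        rw [← mul_assoc, hconst]
        ring

end Integrals

/-- Lemma 3 of the paper: Let `g₀ = dP/dQ` be the true density ratio
and `g, gₙ, g₀` all take values in `[1/M_l, M_u]`. Writing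
`h_Q(u,v) = (∫ (√u − √v)² dQ)^{1/2}` and `c_M = 1/(4 M_l M_u)`, if
`h_Q(gₙ, g₀) ≤ c_M · h_Q(g, gₙ)`, then
`∫ (gₙ^{−1/2} − g^{−1/2}) dP + ∫ (gₙ^{1/2} − g^{1/2}) dQ ≤ −(1/(2√M_u)) h_Q(g,gₙ)²`;
equivalently, with `D(u) = ∫ u^{−1/2} dP + ∫ u^{1/2} dQ` the unnormalized balancing
loss, `D(g) − D(gₙ) ≥ (1/(2√M_u)) h_Q(g,gₙ)²`. -/
theorem sieve_condition_one {X : Type*} [MeasurableSpace X]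
    (P Q : Measure X) [IsProbabilityMeasure P] [IsProbabilityMeasure Q]
    (hPQ : P ≪ Q)
    (g gn g0 : X → ℝ)
    (hgm : Measurable g) (hgnm : Measurable gn) (hg0m : Measurable g0)
    (hver : ∀ᵐ x ∂Q, ENNReal.ofReal (g0 x) = P.rnDeriv Q x)
    (Ml Mu : ℝ) (hMl : 0 < Ml) (hMu : 0 < Mu)
    (hg : ∀ x, 1 / Ml ≤ g x ∧ g x ≤ Mu)
    (hgn : ∀ x, 1 / Ml ≤ gn x ∧ gn x ≤ Mu)
    (hg0 : ∀ x, 1 / Ml ≤ g0 x ∧ g0 x ≤ Mu)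
    (hclose : Real.sqrt (∫ x, (Real.sqrt (gn x) - Real.sqrt (g0 x)) ^ 2 ∂Q)
        ≤ (1 / (4 * Ml * Mu)) *
          Real.sqrt (∫ x, (Real.sqrt (g x) - Real.sqrt (gn x)) ^ 2 ∂Q)) :
    ((∫ x, ((Real.sqrt (gn x))⁻¹ - (Real.sqrt (g x))⁻¹) ∂P)
        + ∫ x, (Real.sqrt (gn x) - Real.sqrt (g x)) ∂Q
      ≤ -(1 / (2 * Real.sqrt Mu)) *
          ∫ x, (Real.sqrt (g x) - Real.sqrt (gn x)) ^ 2 ∂Q)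
    ∧ ((∫ x, (Real.sqrt (g x))⁻¹ ∂P) + (∫ x, Real.sqrt (g x) ∂Q)
        - ((∫ x, (Real.sqrt (gn x))⁻¹ ∂P) + ∫ x, Real.sqrt (gn x) ∂Q)
      ≥ (1 / (2 * Real.sqrt Mu)) *
          ∫ x, (Real.sqrt (g x) - Real.sqrt (gn x)) ^ 2 ∂Q) := by
  have hl : 0 < (√Ml)⁻¹ := inv_pos.2 (Real.sqrt_pos.2 hMl)
  have hu : 0 < √Mu := Real.sqrt_pos.2 hMu
  have hκ : 1 / (4 * Ml * Mu) = (√Ml)⁻¹ ^ 2 / (4 * √Mu ^ 2) := by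
    rw [inv_pow, Real.sq_sqrt hMl.le, Real.sq_sqrt hMu.le]
    field_simp
  have hmem : ∀ f : X → ℝ, (∀ x, 1 / Ml ≤ f x ∧ f x ≤ Mu) → ∀ x, √(f x) ∈ Icc (√Ml)⁻¹ √Mu :=
    fun f hf x => sqrt_mem_Icc_inv_sqrt (hf x)
  have hdensity : ∫ x, ((√(gn x))⁻¹ - (√(g x))⁻¹) ∂P
      = ∫ x, √(g0 x) ^ 2 * ((√(gn x))⁻¹ - (√(g x))⁻¹) ∂Q := by
    have hg0_nonneg : ∀ x, 0 ≤ g0 x := fun x => (one_div_pos.2 hMl).le.trans (hg0 x).1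
    simp only [integral_eq_integral_mul_of_ofReal_eq_rnDeriv hPQ hg0_nonneg hver,
      Real.sq_sqrt (hg0_nonneg _)]
  have hgap := hdensity ▸
    integral_sq_mul_inv_sub_inv_add_integral_sub_le_of_sqrt_integral_le hl hu
      hgm.sqrt hgnm.sqrt hg0m.sqrt (hmem g hg) (hmem gn hgn) (hmem g0 hg0) (hκ ▸ hclose)
  refine ⟨hgap, ?_⟩
  have hintegrable : ∀ (μ : Measure X) [IsFiniteMeasure μ] (f : X → ℝ), Measurable f →
      (∀ x, 1 / Ml ≤ f x ∧ f x ≤ Mu) →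
      Integrable (fun x => √(f x)) μ ∧ Integrable (fun x => (√(f x))⁻¹) μ := fun μ _ f hfm hf =>
    ⟨.of_mem_Icc _ _ hfm.sqrt.aemeasurable (ae_of_all _ (hmem f hf)),
      .of_mem_Icc _ _ hfm.sqrt.inv.aemeasurable
        (ae_of_all _ fun x => inv_mem_Icc_inv hl (hmem f hf x))⟩
  rw [integral_sub (hintegrable P gn hgnm hgn).2 (hintegrable P g hgm hg).2,
    integral_sub (hintegrable Q gn hgnm hgn).1 (hintegrable Q g hgm hg).1] at hgap
  linarith
end

section
/- Let σ : ℝ → ℝ satisfy |σ(s) − σ(t)| ≤ |s − t| for all s,t and σ(0) = 0, applied coordinatewise. Let d, U, L ≥ 1 be integers and B > 0 with U·B ≥ 2. Consider two networks with the same architecture: parameters θ = {W⁽ˡ⁾, b⁽ˡ⁾}_{l=1}^{L} and θ̃ = {W̃⁽ˡ⁾, b̃⁽ˡ⁾}_{l=1}^{L}, where W⁽¹⁾, W̃⁽¹⁾ ∈ ℝ^{U×d}, W⁽ˡ⁾, W̃⁽ˡ⁾ ∈ ℝ^{U×U} for 2 ≤ l ≤ L−1, W⁽ᴸ⁾, W̃⁽ᴸ⁾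 ∈ ℝ^{1×U}, all entries bounded in absolute value by B. Define f_θ(x) = W⁽ᴸ⁾ h_{L−1}(x) + b⁽ᴸ⁾ with h_l the hidden-layer recursion h_l(x) = σ(W⁽ˡ⁾h_{l−1}(x)+b⁽ˡ⁾), h₀(x)=x, and define f_θ̃ analogously. Let d(θ,θ̃) be the maximum over all l of the maximum absolute entrywise difference of the weight matrices and bias vectors. Then for every x ∈ ℝ^d, | f_θ(x) − f_θ̃(x) | ≤ L (U B)^{L−1} ( d‖x‖_∞ + 2 ) · d(θ, θ̃). -/
open scoped BigOperators

lemma abs_sum_le_card_mul {n : ℕ} (f : Fin n → ℝ) (c : ℝ) (h : ∀ j, |f j| ≤ c) :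
    |∑ j, f j| ≤ (n : ℝ) * c := by
  calc |∑ j, f j| ≤ ∑ j, |f j| := Finset.abs_sum_le_sum_abs _ _
    _ ≤ ∑ _j : Fin n, c := Finset.sum_le_sum fun j _ => h j
    _ = (n : ℝ) * c := by simp [Finset.sum_const, mul_comm]

lemma layer_norm_bound {n : ℕ} (B A : ℝ) (hB : 0 ≤ B) (v g : Fin n → ℝ) (c : ℝ)
    (hv : ∀ j, |v j| ≤ B) (hg : ∀ j, |g j| ≤ A) (hc : |c| ≤ B) :
    |(∑ j, v j * g j) + c| ≤ (n : ℝ) * (B * A) + B := by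
  calc |(∑ j, v j * g j) + c| ≤ |∑ j, v j * g j| + |c| := abs_add_le _ _
    _ ≤ (n : ℝ) * (B * A) + B := by
        refine add_le_add ?_ hc
        refine abs_sum_le_card_mul _ _ fun j => ?_
        rw [abs_mul]
        exact mul_le_mul (hv j) (hg j) (abs_nonneg _) hB

lemma layer_diff_bound {n : ℕ} (B dθ A Δ : ℝ) (hB : 0 ≤ B) (hdθ : 0 ≤ dθ)
    (v v' g g' : Fin n → ℝ) (c c' : ℝ)
    (hv : ∀ j, |v j| ≤ B) (hdv : ∀ j, |v j - v' j| ≤ dθ)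
    (hg' : ∀ j, |g' j| ≤ A) (hdg : ∀ j, |g j - g' j| ≤ Δ)
    (hc : |c - c'| ≤ dθ) :
    |((∑ j, v j * g j) + c) - ((∑ j, v' j * g' j) + c')|
      ≤ (n : ℝ) * (B * Δ + dθ * A) + dθ := by
  have heq : ((∑ j, v j * g j) + c) - ((∑ j, v' j * g' j) + c')
      = (∑ j, (v j * (g j - g' j) + (v j - v' j) * g' j)) + (c - c') := by
    have h1 : ∀ j : Fin n, v j * (g j - g' j) + (v j - v' j) * g' j
        = v j * g j - v' j * g' j := fun j => by ring
    simp only [h1, Finset.sum_sub_distrib]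
    ring
  rw [heq]
  calc _ ≤ |∑ j, (v j * (g j - g' j) + (v j - v' j) * g' j)| + |c - c'| := abs_add_le _ _
    _ ≤ (n : ℝ) * (B * Δ + dθ * A) + dθ := by
        refine add_le_add ?_ hc
        refine abs_sum_le_card_mul _ _ fun j => ?_
        calc |v j * (g j - g' j) + (v j - v' j) * g' j|
            ≤ |v j * (g j - g' j)| + |(v j - v' j) * g' j| := abs_add_le _ _
          _ ≤ B * Δ + dθ * A := by
              rw [abs_mul, abs_mul]
              exact add_le_add
                (mul_le_mul (hv j) (hdg j) (abs_nonneg _) hB)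
                (mul_le_mul (hdv j) (hg' j) (abs_nonneg _) hdθ)

/-- Lipschitz continuity of the network output in its parameters.
Two networks with the same architecture (depth `L ≥ 2`, width at most `U`, input
dimension `d`, scalar output, 1-Lipschitz activation with `σ(0)=0`, all parameter
entries bounded by `B`, `U·B ≥ 2`) whose parameters differ entrywise by at most `dθ`
satisfy `|f_θ(x) − f_θ̃(x)| ≤ L (U B)^{L−1} (d‖x‖_∞ + 2) · dθ`. -/
theorem nn_parameter_lipschitz {d U L : ℕ} (hd : 1 ≤ d) (hU : 1 ≤ U) (hL : 2 ≤ L)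
    (B : ℝ) (hB : 0 < B) (hUB : (2 : ℝ) ≤ (U : ℝ) * B)
    (σ : ℝ → ℝ) (hσLip : ∀ s t : ℝ, |σ s - σ t| ≤ |s - t|) (hσ0 : σ 0 = 0)
    (W1 W1' : Matrix (Fin U) (Fin d) ℝ) (W W' : ℕ → Matrix (Fin U) (Fin U) ℝ)
    (b b' : ℕ → Fin U → ℝ) (wL wL' : Fin U → ℝ) (bL bL' : ℝ)
    (hW1 : ∀ i j, |W1 i j| ≤ B) (hW : ∀ l i j, |W l i j| ≤ B)
    (hb : ∀ l i, |b l i| ≤ B) (hwL : ∀ i, |wL i| ≤ B) (hbL : |bL| ≤ B)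
    (hW1' : ∀ i j, |W1' i j| ≤ B) (hW' : ∀ l i j, |W' l i j| ≤ B)
    (hb' : ∀ l i, |b' l i| ≤ B) (hwL' : ∀ i, |wL' i| ≤ B) (hbL' : |bL'| ≤ B)
    (x : Fin d → ℝ)
    (h h' : ℕ → Fin U → ℝ)
    (hh1 : h 1 = fun i => σ ((W1.mulVec x + b 1) i))
    (hhl : ∀ l, 2 ≤ l → h l = fun i => σ (((W l).mulVec (h (l - 1)) + b l) i))
    (hh1' : h' 1 = fun i => σ ((W1'.mulVec x + b' 1) i))
    (hhl' : ∀ l, 2 ≤ l → h' l = fun i => σ (((W' l).mulVec (h' (l - 1)) + b' l) i))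
    (dθ : ℝ)
    (hdW1 : ∀ i j, |W1 i j - W1' i j| ≤ dθ)
    (hdW : ∀ l i j, |W l i j - W' l i j| ≤ dθ)
    (hdb : ∀ l i, |b l i - b' l i| ≤ dθ)
    (hdwL : ∀ i, |wL i - wL' i| ≤ dθ)
    (hdbL : |bL - bL'| ≤ dθ) :
    |((∑ i, wL i * h (L - 1) i) + bL) - ((∑ i, wL' i * h' (L - 1) i) + bL')|
      ≤ (L : ℝ) * ((U : ℝ) * B) ^ (L - 1) * ((d : ℝ) * ‖x‖ + 2) * dθ := by
  have hdθ : (0:ℝ) ≤ dθ := (abs_nonneg _).trans hdbL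
  have hσabs : ∀ t, |σ t| ≤ |t| := fun t => by simpa [hσ0] using hσLip t 0
  have hxj : ∀ j, |x j| ≤ ‖x‖ := fun j => by
    simpa [Real.norm_eq_abs] using norm_le_pi_norm x j
  have hx0 : (0:ℝ) ≤ ‖x‖ := norm_nonneg x
  set K : ℝ := (d : ℝ) * ‖x‖ + 2 with hKdef
  set r : ℝ := (U : ℝ) * B with hrdef
  have hr2 : (2:ℝ) ≤ r := hUB
  have hd0 : (0:ℝ) ≤ (d:ℝ) * ‖x‖ := by positivity
  -- main induction
  have main : ∀ l, 1 ≤ l → (∀ i, |h' l i| ≤ B * r ^ (l - 1) * K - B) ∧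
      (∀ i, |h l i - h' l i| ≤ (l : ℝ) * r ^ (l - 1) * K * dθ) := by
    intro l hl
    induction l, hl using Nat.le_induction with
    | base =>
      constructor
      · intro i
        rw [hh1']
        refine (hσabs _).trans ?_
        have := layer_norm_bound B ‖x‖ hB.le (fun j => W1' i j) x (b' 1 i)
          (fun j => hW1' i j) hxj (hb' 1 i)
        have heq : (W1'.mulVec x + b' 1) i = (∑ j, W1' i j * x j) + b' 1 i := by
          simp [Matrix.mulVec, dotProduct]
        rw [heq]
        refine this.trans ?_
        norm_num [hKdef]
        nlinarith [hB.le, hx0]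
      · intro i
        rw [hh1, hh1']
        refine (hσLip _ _).trans ?_
        have heq1 : (W1.mulVec x + b 1) i = (∑ j, W1 i j * x j) + b 1 i := by
          simp [Matrix.mulVec, dotProduct]
        have heq2 : (W1'.mulVec x + b' 1) i = (∑ j, W1' i j * x j) + b' 1 i := by
          simp [Matrix.mulVec, dotProduct]
        rw [heq1, heq2]
        have := layer_diff_bound B dθ ‖x‖ 0 hB.le hdθ (fun j => W1 i j)
          (fun j => W1' i j) x x (b 1 i) (b' 1 i)
          (fun j => hW1 i j) (fun j => hdW1 i j) hxj (fun j => by simp) (hdb 1 i)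
        refine this.trans ?_
        norm_num [hKdef]
        nlinarith [hdθ, hd0, hx0]
    | succ n hn ih =>
      obtain ⟨ihA, ihD⟩ := ih
      have hn2 : 2 ≤ n + 1 := by omega
      have hsub : n + 1 - 1 = n := rfl
      have hpow : r ^ (n - 1) * r = r ^ n := by
        rw [← pow_succ, Nat.sub_add_cancel hn]
      constructor
      · intro i
        rw [hhl' (n+1) hn2]
        refine (hσabs _).trans ?_
        have heq : ((W' (n+1)).mulVec (h' n) + b' (n+1)) i
            = (∑ j, W' (n+1) i j * h' n j) + b' (n+1) i := by
          simp [Matrix.mulVec, dotProduct]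
        simp only [hsub, heq]
        have := layer_norm_bound B (B * r ^ (n-1) * K - B) hB.le
          (fun j => W' (n+1) i j) (h' n) (b' (n+1) i)
          (fun j => hW' (n+1) i j) ihA (hb' (n+1) i)
        refine this.trans ?_
        have key : (U:ℝ) * (B * (B * r ^ (n-1) * K - B)) + B
            = B * r ^ n * K - r * B + B := by
          rw [← hpow, hrdef]; ring
        rw [key]
        nlinarith [hB.le, hr2]
      · intro i
        rw [hhl (n+1) hn2, hhl' (n+1) hn2]
        refine (hσLip _ _).trans ?_
        have heq1 : ((W (n+1)).mulVec (h n) + b (n+1)) i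
            = (∑ j, W (n+1) i j * h n j) + b (n+1) i := by
          simp [Matrix.mulVec, dotProduct]
        have heq2 : ((W' (n+1)).mulVec (h' n) + b' (n+1)) i
            = (∑ j, W' (n+1) i j * h' n j) + b' (n+1) i := by
          simp [Matrix.mulVec, dotProduct]
        simp only [hsub, heq1, heq2]
        have := layer_diff_bound B dθ (B * r ^ (n-1) * K - B)
          ((n:ℝ) * r ^ (n-1) * K * dθ) hB.le hdθ
          (fun j => W (n+1) i j) (fun j => W' (n+1) i j) (h n) (h' n)
          (b (n+1) i) (b' (n+1) i)
          (fun j => hW (n+1) i j) (fun j => hdW (n+1) i j) ihA ihD (hdb (n+1) i)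
        refine this.trans ?_
        have key : (U:ℝ) * (B * ((n:ℝ) * r ^ (n-1) * K * dθ)
              + dθ * (B * r ^ (n-1) * K - B)) + dθ
            = ((n:ℝ) + 1) * r ^ n * K * dθ - (r - 1) * dθ := by
          rw [← hpow, hrdef]; ring
        have hcast : ((n+1 : ℕ) : ℝ) = (n:ℝ) + 1 := by push_cast; ring
        rw [key, hcast]
        nlinarith [mul_nonneg (by linarith : (0:ℝ) ≤ r - 1) hdθ]
  -- final layer
  have hm1 : 1 ≤ L - 1 := by omega
  obtain ⟨hA, hD⟩ := main (L - 1) hm1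
  have hpow : r ^ (L - 1 - 1) * r = r ^ (L - 1) := by
    rw [← pow_succ, Nat.sub_add_cancel hm1]
  have hdiff := layer_diff_bound B dθ (B * r ^ (L-1-1) * K - B)
    (((L-1:ℕ):ℝ) * r ^ (L-1-1) * K * dθ) hB.le hdθ
    wL wL' (h (L-1)) (h' (L-1)) bL bL' hwL hdwL hA hD hdbL
  refine hdiff.trans ?_
  have hcast : ((L-1:ℕ):ℝ) = (L:ℝ) - 1 := by
    have : (1:ℕ) ≤ L := by omega
    push_cast [Nat.cast_sub this]
    ring
  have key : (U:ℝ) * (B * (((L-1:ℕ):ℝ) * r ^ (L-1-1) * K * dθ)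
        + dθ * (B * r ^ (L-1-1) * K - B)) + dθ
      = (((L-1:ℕ):ℝ) + 1) * r ^ (L-1) * K * dθ - (r - 1) * dθ := by
    rw [← hpow, hrdef]; ring
  rw [key, hcast]
  have h1 : (0:ℝ) ≤ (r - 1) * dθ := mul_nonneg (by linarith) hdθ
  have h2 : (L:ℝ) - 1 + 1 = (L:ℝ) := by ring
  rw [h2]
  linarith
end

section
/- Let (𝒳, 𝒜) be a measurable space, P a probability measure on 𝒳, and X₁, X₂, … an i.i.d. sequence of 𝒳-valued random variables with law P, defined on a probability space (Ω, 𝔽, ℙ). Let F be a family of measurable functions f : 𝒳 → ℝ. Assume that for every ε > 0 there exists a finite collection of pairs of P-integrable measurable functions (ℓ_j, u_j), j = 1,…,M(ε), with ℓ_j ≤ u_j pointwise and ∫ (u_j − ℓ_j) dP ≤ ε, such that every f ∈ F satisfies ℓ_j ≤ f ≤ u_j pointwise for some j (i.e. the L¹(P)-bracketing numbers of F are finite). For ω ∈ Ω and n ≥ 1, let Pₙ = Pₙ(ω) be the empirical measure (1/n)∑_{i=1}^n δ_{X_i(ω)}, and let N(ε, F, L¹(Pₙ)) denote the smallest cardinality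 k of a set of functions f₁,…,f_k : 𝒳 → ℝ such that every f ∈ F satisfies (1/n)∑_{i=1}^n |f(X_i) − f_m(X_i)| ≤ ε for some m ≤ k (with N = ∞ if no finite such set exists). Then for every ε > 0, (1/n) · log N(ε, F, L¹(Pₙ)) → 0 in ℙ-probability as n → ∞; that is, for every ε > 0 and δ > 0, ℙ( log N(ε, F, L¹(Pₙ)) ≥ δ n ) → 0. -/
/-!
Take brackets `[l j, u j]`, `j < M`, of `L¹(P)`-width at most `ε / 2`. By the strong law of
large numbers each empirical width `Pₙ (u j - l j)` converges almost surely, hence in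
probability, to a limit `≤ ε / 2`, so with probability tending to one all of them are `≤ ε`. On that event the lower brackets `l j` form an
`L¹(Pₙ)`-net of `F` of size `M`, so `log N(ε, F, L¹(Pₙ)) ≤ log M < δ n` once `n` is large.
-/

open MeasureTheory Filter ProbabilityTheory

noncomputable def empiricalMean {𝒳 Ω : Type*} (X : ℕ → Ω → 𝒳) (g : 𝒳 → ℝ) (n : ℕ) (ω : Ω) :
    ℝ :=
  (1 / (n : ℝ)) * ∑ i : Fin n, g (X i ω)

section EmpiricalMean

variable {𝒳 Ω : Type*} [MeasurableSpace 𝒳] {mΩ : MeasurableSpace Ω} {μ : Measure Ω}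
  {P : Measure 𝒳} {X : ℕ → Ω → 𝒳}

theorem measurable_empiricalMean (hXm : ∀ i, Measurable (X i)) {g : 𝒳 → ℝ} (hgm : Measurable g)
    (n : ℕ) : Measurable (empiricalMean X g n) :=
  (Finset.measurable_fun_sum (Finset.univ : Finset (Fin n)) fun i _ => hgm.comp (hXm i)).const_mul _

theorem ae_tendsto_empiricalMean (hXm : ∀ i, Measurable (X i)) (hiid : iIndepFun X μ)
    (hlaw : ∀ i, μ.map (X i) = P) {g : 𝒳 → ℝ} (hgm : Measurable g) (hg : Integrable g P) :
    ∀ᵐ ω ∂μ, Tendsto (fun n => empiricalMean X g n ω) atTop (nhds (∫ x, g x ∂P)) := by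
  have hident : ∀ i, IdentDistrib (fun ω => g (X i ω)) (fun ω => g (X 0 ω)) μ μ := fun i =>
    IdentDistrib.comp ⟨(hXm i).aemeasurable, (hXm 0).aemeasurable, by rw [hlaw i, hlaw 0]⟩ hgm
  have hint : Integrable (fun ω => g (X 0 ω)) μ := by
    rw [← hlaw 0] at hg
    exact hg.comp_measurable (hXm 0)
  have hmean : ∫ ω, g (X 0 ω) ∂μ = ∫ x, g x ∂P := by
    rw [← hlaw 0, integral_map (hXm 0).aemeasurable hgm.aestronglyMeasurable]
  have hslln := strong_law_ae_real (fun i ω => g (X i ω)) hint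
    (fun i k hik => (hiid.indepFun hik).comp hgm hgm) hident
  rw [hmean] at hslln
  filter_upwards [hslln] with ω hω
  simpa [empiricalMean, Fin.sum_univ_eq_sum_range (fun i => g (X i ω)), div_eq_inv_mul] using hω

theorem tendsto_measure_lt_empiricalMean [IsFiniteMeasure μ] (hXm : ∀ i, Measurable (X i))
    (hiid : iIndepFun X μ) (hlaw : ∀ i, μ.map (X i) = P) {g : 𝒳 → ℝ} (hgm : Measurable g)
    (hg : Integrable g P) {c : ℝ} (hc : ∫ x, g x ∂P < c) :
    Tendsto (fun n => μ {ω | c < empiricalMean X g n ω}) atTop (nhds 0) := by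
  have hconv : TendstoInMeasure μ (empiricalMean X g) atTop fun _ => ∫ x, g x ∂P :=
    tendstoInMeasure_of_tendsto_ae
      (fun n => (measurable_empiricalMean hXm hgm n).aestronglyMeasurable)
      (ae_tendsto_empiricalMean hXm hiid hlaw hgm hg)
  rw [tendstoInMeasure_iff_dist] at hconv
  refine tendsto_of_tendsto_of_tendsto_of_le_of_le tendsto_const_nhds
    (hconv _ (sub_pos.2 hc)) (fun _ => zero_le) fun n => measure_mono fun ω hω => ?_
  have hω : c < empiricalMean X g n ω := hω
  show c - ∫ x, g x ∂P ≤ dist (empiricalMean X g n ω) (∫ x, g x ∂P)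
  rw [Real.dist_eq]
  linarith [le_abs_self (empiricalMean X g n ω - ∫ x, g x ∂P)]

end EmpiricalMean

theorem empiricalDist_le_empiricalMean_of_mem_bracket {𝒳 Ω : Type*} (X : ℕ → Ω → 𝒳) (n : ℕ)
    (ω : Ω) {f l u : 𝒳 → ℝ} (hf : ∀ x, l x ≤ f x ∧ f x ≤ u x) :
    (1 / (n : ℝ)) * ∑ i : Fin n, |f (X i ω) - l (X i ω)| ≤ empiricalMean X (u - l) n ω := by
  refine mul_le_mul_of_nonneg_left (Finset.sum_le_sum fun i _ => ?_) (by positivity)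
  rw [abs_of_nonneg (sub_nonneg.2 (hf _).1)]
  exact sub_le_sub_right (hf _).2 _

theorem exists_empiricalNet_of_brackets {𝒳 Ω : Type*} {X : ℕ → Ω → 𝒳} {F : Set (𝒳 → ℝ)}
    {M n : ℕ} {l u : Fin M → 𝒳 → ℝ} (hcover : ∀ f ∈ F, ∃ j, ∀ x, l j x ≤ f x ∧ f x ≤ u j x)
    {ε : ℝ} {ω : Ω} (hω : ∀ j, empiricalMean X (u j - l j) n ω ≤ ε) :
    ∃ fs : Fin M → 𝒳 → ℝ, ∀ f ∈ F, ∃ m : Fin M,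
      (1 / (n : ℝ)) * ∑ i : Fin n, |f (X i ω) - fs m (X i ω)| ≤ ε := by
  refine ⟨l, fun f hf => ?_⟩
  obtain ⟨j, hj⟩ := hcover f hf
  exact ⟨j, (empiricalDist_le_empiricalMean_of_mem_bracket X n ω hj).trans (hω j)⟩

theorem empirical_entropy_small_general {𝒳 Ω : Type*} [MeasurableSpace 𝒳] [MeasurableSpace Ω]
    (μ : Measure Ω) [IsProbabilityMeasure μ]
    (P : Measure 𝒳)
    (X : ℕ → Ω → 𝒳) (hXm : ∀ i, Measurable (X i))
    (hiid : ProbabilityTheory.iIndepFun X μ)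
    (hlaw : ∀ i, μ.map (X i) = P)
    (F : Set (𝒳 → ℝ))
    (hbracket : ∀ ε : ℝ, 0 < ε → ∃ (M : ℕ) (l u : Fin M → 𝒳 → ℝ),
        (∀ j, Measurable (l j) ∧ Measurable (u j)
          ∧ Integrable (l j) P ∧ Integrable (u j) P
          ∧ (∀ x, l j x ≤ u j x) ∧ (∫ x, (u j x - l j x) ∂P) ≤ ε)
        ∧ ∀ f ∈ F, ∃ j, ∀ x, l j x ≤ f x ∧ f x ≤ u j x)
    (ε δ : ℝ) (hε : 0 < ε) (hδ : 0 < δ) :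
    Tendsto
      (fun n : ℕ => μ {ω : Ω | ∀ k : ℕ,
          (∃ fs : Fin k → 𝒳 → ℝ, ∀ f ∈ F, ∃ m : Fin k,
              (1 / (n : ℝ)) * ∑ i : Fin n, |f (X i ω) - fs m (X i ω)| ≤ ε)
          → δ * (n : ℝ) ≤ Real.log (k : ℝ)})
      atTop (nhds 0) := by
  obtain ⟨M, l, u, hbr, hcover⟩ := hbracket (ε / 2) (by positivity)
  choose hlm hum hli hui _ hwidth using hbr
  have hbad : ∀ j, Tendsto (fun n => μ {ω | ε < empiricalMean X (u j - l j) n ω}) atTop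
      (nhds 0) := fun j =>
    tendsto_measure_lt_empiricalMean hXm hiid hlaw ((hum j).sub (hlm j)) ((hui j).sub (hli j))
      ((hwidth j).trans_lt (by linarith))
  have hsum := tendsto_finsetSum Finset.univ fun j _ => hbad j
  rw [Finset.sum_const_zero] at hsum
  refine tendsto_of_tendsto_of_tendsto_of_le_of_le' tendsto_const_nhds hsum
    (Eventually.of_forall fun _ => zero_le) ?_
  filter_upwards [(tendsto_natCast_atTop_atTop.const_mul_atTop hδ).eventually_gt_atTop
    (Real.log M)] with n hn
  refine (measure_mono fun ω hω => ?_).trans (measure_iUnion_fintype_le μ _)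
  by_contra hgood
  simp only [Set.mem_iUnion, Set.mem_ofPred_eq, not_exists, not_lt] at hgood
  exact hn.not_ge (hω M (exists_empiricalNet_of_brackets hcover hgood))

/-- Lemma 2 of the paper: if the `L¹(P)`-bracketing numbers of a
class `F` of measurable functions are all finite, then for every `ε > 0` the
empirical `L¹(Pₙ)` metric entropy of `F` is `o_P(n)`: for every `δ > 0`, the
probability that every empirical `ε`-net of `F` (in the `L¹(Pₙ)` seminorm of the
first `n` i.i.d. observations) has cardinality `k` with `log k ≥ δ n` tends to `0`.
(The displayed event is exactly `{log N(ε, F, L¹(Pₙ)) ≥ δ n}`, with the convention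
that it holds when no finite net exists.) -/
theorem empirical_entropy_small {𝒳 Ω : Type*} [MeasurableSpace 𝒳] [MeasurableSpace Ω]
    (μ : Measure Ω) [IsProbabilityMeasure μ]
    (P : Measure 𝒳) [IsProbabilityMeasure P]
    (X : ℕ → Ω → 𝒳) (hXm : ∀ i, Measurable (X i))
    (hiid : ProbabilityTheory.iIndepFun X μ)
    (hlaw : ∀ i, μ.map (X i) = P)
    (F : Set (𝒳 → ℝ)) (hFm : ∀ f ∈ F, Measurable f)
    (hbracket : ∀ ε : ℝ, 0 < ε → ∃ (M : ℕ) (l u : Fin M → 𝒳 → ℝ),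
        (∀ j, Measurable (l j) ∧ Measurable (u j)
          ∧ Integrable (l j) P ∧ Integrable (u j) P
          ∧ (∀ x, l j x ≤ u j x) ∧ (∫ x, (u j x - l j x) ∂P) ≤ ε)
        ∧ ∀ f ∈ F, ∃ j, ∀ x, l j x ≤ f x ∧ f x ≤ u j x)
    (ε δ : ℝ) (hε : 0 < ε) (hδ : 0 < δ) :
    Tendsto
      (fun n : ℕ => μ {ω : Ω | ∀ k : ℕ,
          (∃ fs : Fin k → 𝒳 → ℝ, ∀ f ∈ F, ∃ m : Fin k,
              (1 / (n : ℝ)) * ∑ i : Fin n, |f (X i ω) - fs m (X i ω)| ≤ ε)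
          → δ * (n : ℝ) ≤ Real.log (k : ℝ)})
      atTop (nhds 0) :=
  empirical_entropy_small_general μ P X hXm hiid hlaw F hbracket ε δ hε hδ
end
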